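/- arXiv:1503.07368 — 4 statements merged into one kernel-verified Lean document; each statement's English description precedes it below -/
import Mathlib

section
/- For every m > 0 and c > 0, the estimation-error value satisfies lim_{ε→0} ε^{−4m/(2m+1)} R_ε(m,c) = P_{m,c}, where P_{m,c} = (c²(2m+1)/π^{2m})^{1/(2m+1)} · (m/(m+1))^{2m/(2m+1)} is the Pinsker constant. -/
open MeasureTheory Filter

noncomputable section

/-- `σ²` is admissible: a nonnegative sequence with `∑_{j≥1} j^{2m} σ_j² ≤ c²/π^{2m}`
(the index `j : ℕ` corresponds to the coefficient `j+1 ≥ 1`). -/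
def Admissible (m c : ℝ) (σ2 : ℕ → ℝ) : Prop :=
  (∀ j, 0 ≤ σ2 j) ∧ Summable (fun j : ℕ => ((j : ℝ) + 1) ^ (2 * m) * σ2 j) ∧
    ∑' j : ℕ, ((j : ℝ) + 1) ^ (2 * m) * σ2 j ≤ c ^ 2 / Real.pi ^ (2 * m)

/-- `μ²` is `B`-feasible for `σ²`: a positive sequence with
`∑_{j≥1} (1/2) log₊(σ_j⁴/(μ_j²(σ_j²+ε²))) ≤ B`. -/
def BFeasible (ε B : ℝ) (σ2 μ2 : ℕ → ℝ) : Prop :=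
  (∀ j, 0 < μ2 j) ∧
  Summable (fun j : ℕ => (1 / 2) * max (Real.log ((σ2 j) ^ 2 / (μ2 j * (σ2 j + ε ^ 2)))) 0) ∧
  ∑' j : ℕ, (1 / 2) * max (Real.log ((σ2 j) ^ 2 / (μ2 j * (σ2 j + ε ^ 2)))) 0 ≤ B

/-- The estimation-error value `R_ε(m,c)`: the supremum over admissible `σ²` of
`∑_j σ_j² ε²/(σ_j² + ε²)`. -/
def estVal (m c ε : ℝ) : ℝ :=
  sSup { r | ∃ σ2, Admissible m c σ2 ∧ r = ∑' j : ℕ, σ2 j * ε ^ 2 / (σ2 j + ε ^ 2) }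


/-- Pinsker's constant `P_{m,c}`. -/
def pinskerConstant (m c : ℝ) : ℝ :=
  (c ^ 2 * (2 * m + 1) / Real.pi ^ (2 * m)) ^ (1 / (2 * m + 1)) *
    (m / (m + 1)) ^ (2 * m / (2 * m + 1))


namespace PinskerAux

open Real Finset

/-- tangent line bound for x ↦ x^(p+1), p ≥ 0 -/
lemma tangent {p : ℝ} (hp : 0 ≤ p) {k y : ℝ} (hk : 0 < k) (hy : 0 ≤ y) :
    k ^ (p+1) + (p+1) * k ^ p * (y - k) ≤ y ^ (p+1) := by
  have hs : (-1 : ℝ) ≤ (y - k)/k := by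
    rw [neg_le, ← neg_div, div_le_one hk]; nlinarith
  have hb := one_add_mul_self_le_rpow_one_add hs (by linarith : (1:ℝ) ≤ p + 1)
  have h1 : (1 : ℝ) + (y-k)/k = y / k := by field_simp; ring
  rw [h1] at hb
  have h2 : (y/k) ^ (p+1) = y ^ (p+1) / k ^ (p+1) := Real.div_rpow hy hk.le (p+1)
  rw [h2] at hb
  have hkp : (0:ℝ) < k ^ (p+1) := rpow_pos_of_pos hk _
  have hb' := mul_le_mul_of_nonneg_right hb hkp.le
  have h3 : k ^ (p+1) = k ^ p * k := by
    rw [Real.rpow_add hk, Real.rpow_one]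
  calc k ^ (p+1) + (p+1) * k ^ p * (y - k)
      = (1 + (p+1) * ((y-k)/k)) * k ^ (p+1) := by
        rw [h3]; field_simp
    _ ≤ y ^ (p+1) / k ^ (p+1) * k ^ (p+1) := hb'
    _ = y ^ (p+1) := by field_simp

lemma sum_rpow_lb {p : ℝ} (hp : 0 ≤ p) (n : ℕ) :
    (n:ℝ) ^ (p+1) / (p+1) ≤ ∑ j ∈ Finset.range n, ((j:ℝ)+1) ^ p := by
  have hp1 : (0:ℝ) < p + 1 := by linarith
  rw [div_le_iff₀ hp1]
  have key : ∀ j : ℕ, ((j+1:ℕ):ℝ) ^ (p+1) - ((j:ℕ):ℝ) ^ (p+1) ≤ ((j:ℝ)+1) ^ p * (p+1) := by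
    intro j
    have hk : (0:ℝ) < (j:ℝ) + 1 := by positivity
    have := tangent hp hk (Nat.cast_nonneg j) (y := (j:ℝ))
    push_cast
    nlinarith
  calc (n:ℝ) ^ (p+1) = ((n:ℕ):ℝ) ^ (p+1) - ((0:ℕ):ℝ) ^ (p+1) := by
        simp [Real.zero_rpow hp1.ne']
    _ = ∑ j ∈ Finset.range n, (((j+1:ℕ):ℝ) ^ (p+1) - ((j:ℕ):ℝ) ^ (p+1)) :=
        (Finset.sum_range_sub (fun i : ℕ => ((i:ℕ):ℝ) ^ (p+1)) n).symm
    _ ≤ ∑ j ∈ Finset.range n, ((j:ℝ)+1) ^ p * (p+1) := Finset.sum_le_sum (fun j _ => key j)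
    _ = (∑ j ∈ Finset.range n, ((j:ℝ)+1) ^ p) * (p+1) := by rw [← Finset.sum_mul]

lemma sum_rpow_ub {p : ℝ} (hp : 0 ≤ p) (n : ℕ) :
    ∑ j ∈ Finset.range n, ((j:ℝ)+1) ^ p ≤ ((n:ℝ)+1) ^ (p+1) / (p+1) := by
  have hp1 : (0:ℝ) < p + 1 := by linarith
  rw [le_div_iff₀ hp1]
  have key : ∀ j : ℕ, ((j:ℝ)+1) ^ p * (p+1) ≤ (((j+1:ℕ):ℝ)+1) ^ (p+1) - (((j:ℕ):ℝ)+1) ^ (p+1) := by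
    intro j
    have hk : (0:ℝ) < (j:ℝ) + 1 := by positivity
    have := tangent hp hk (by positivity : (0:ℝ) ≤ (j:ℝ) + 2) (y := (j:ℝ)+2)
    push_cast
    have h22 : ((j:ℝ)+1+1) = (j:ℝ)+2 := by ring
    rw [h22]
    nlinarith
  calc (∑ j ∈ Finset.range n, ((j:ℝ)+1) ^ p) * (p+1)
      = ∑ j ∈ Finset.range n, ((j:ℝ)+1) ^ p * (p+1) := by rw [← Finset.sum_mul]
    _ ≤ ∑ j ∈ Finset.range n, ((((j+1:ℕ):ℝ)+1) ^ (p+1) - (((j:ℕ):ℝ)+1) ^ (p+1)) :=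
        Finset.sum_le_sum (fun j _ => key j)
    _ = (((n:ℕ):ℝ)+1) ^ (p+1) - (((0:ℕ):ℝ)+1) ^ (p+1) :=
        Finset.sum_range_sub (fun i : ℕ => (((i:ℕ):ℝ)+1) ^ (p+1)) n
    _ ≤ ((n:ℝ)+1) ^ (p+1) := by
        simp only [Nat.cast_zero, zero_add, Real.one_rpow]
        linarith

lemma tendsto_succ_div_rpow (p : ℝ) :
    Tendsto (fun n : ℕ => (((n:ℝ)+1)/(n:ℝ)) ^ p) atTop (nhds 1) := by
  have h1 : Tendsto (fun n : ℕ => ((n:ℝ)+1)/(n:ℝ)) atTop (nhds 1) := by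
    have : ∀ᶠ n : ℕ in atTop, ((n:ℝ)+1)/(n:ℝ) = 1 + (n:ℝ)⁻¹ := by
      filter_upwards [eventually_ge_atTop 1] with n hn
      have : (n:ℝ) ≠ 0 := by positivity
      field_simp
    rw [tendsto_congr' this]
    have := (tendsto_inv_atTop_zero.comp (tendsto_natCast_atTop_atTop (R := ℝ))).const_add 1
    simpa using this
  have := (Real.continuousAt_rpow_const 1 p (Or.inl one_ne_zero)).tendsto.comp h1
  rwa [Real.one_rpow] at this

lemma sum_rpow_tendsto {p : ℝ} (hp : 0 ≤ p) :
    Tendsto (fun n : ℕ => (∑ j ∈ Finset.range n, ((j:ℝ)+1) ^ p) / (n:ℝ) ^ (p+1))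
      atTop (nhds (1/(p+1))) := by
  have hp1 : (0:ℝ) < p + 1 := by linarith
  apply tendsto_of_tendsto_of_tendsto_of_le_of_le' (g := fun _ : ℕ => 1/(p+1))
      (h := fun n : ℕ => (((n:ℝ)+1)/(n:ℝ)) ^ (p+1) / (p+1))
  · exact tendsto_const_nhds
  · have := (tendsto_succ_div_rpow (p+1)).div_const (p+1)
    simpa using this
  · filter_upwards [eventually_ge_atTop 1] with n hn
    have hn0 : (0:ℝ) < (n:ℝ) ^ (p+1) := by
      apply Real.rpow_pos_of_pos; exact_mod_cast Nat.pos_of_ne_zero (by omega)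
    have h := sum_rpow_lb hp n
    rw [div_le_iff₀ hp1] at h
    rw [div_le_div_iff₀ hp1 hn0]
    linarith
  · filter_upwards [eventually_ge_atTop 1] with n hn
    have hn0 : (0:ℝ) < (n:ℝ) ^ (p + 1) := by
      apply Real.rpow_pos_of_pos; exact_mod_cast Nat.pos_of_ne_zero (by omega)
    have h := sum_rpow_ub hp n
    rw [le_div_iff₀ hp1] at h
    rw [Real.div_rpow (by positivity) (by positivity), div_div,
      div_le_div_iff₀ hn0 (by positivity)]
    nlinarith [hn0.le, Finset.sum_nonneg (fun j (_ : j ∈ Finset.range n) =>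
      (Real.rpow_pos_of_pos (by positivity : (0:ℝ) < (j:ℝ)+1) p).le)]

/-- `S m n = Σ_{j<n} (1 - ((j+1)/n)^m)` -/
def S (m : ℝ) (n : ℕ) : ℝ := ∑ j ∈ Finset.range n, (1 - ((j:ℝ)+1)^m / (n:ℝ)^m)

/-- `T m n = Σ_{j<n} (j+1)^m (n^m - (j+1)^m)` -/
def T (m : ℝ) (n : ℕ) : ℝ :=
  ∑ j ∈ Finset.range n, ((j:ℝ)+1)^m * ((n:ℝ)^m - ((j:ℝ)+1)^m)

variable {m : ℝ}

lemma S_nonneg (hm : 0 < m) (n : ℕ) : 0 ≤ S m n := by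
  apply Finset.sum_nonneg
  intro j hj
  rw [Finset.mem_range] at hj
  have h1 : ((j:ℝ)+1) ^ m ≤ (n:ℝ) ^ m := by
    apply Real.rpow_le_rpow (by positivity) _ hm.le
    have : (j:ℝ) + 1 ≤ (n:ℝ) := by exact_mod_cast hj
    linarith
  have h2 : (0:ℝ) < (n:ℝ) ^ m :=
    Real.rpow_pos_of_pos (by exact_mod_cast Nat.zero_lt_of_lt hj) m
  rw [sub_nonneg, div_le_one h2]
  exact h1

lemma T_nonneg (hm : 0 < m) (n : ℕ) : 0 ≤ T m n := by
  apply Finset.sum_nonneg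
  intro j hj
  rw [Finset.mem_range] at hj
  have h1 : ((j:ℝ)+1) ^ m ≤ (n:ℝ) ^ m := by
    apply Real.rpow_le_rpow (by positivity) _ hm.le
    have : (j:ℝ) + 1 ≤ (n:ℝ) := by exact_mod_cast hj
    linarith
  have h0 : (0:ℝ) < ((j:ℝ)+1) ^ m := Real.rpow_pos_of_pos (by positivity) m
  nlinarith

lemma T_mono (hm : 0 < m) : Monotone (T m) := by
  apply monotone_nat_of_le_succ
  intro n
  rw [T, T, Finset.sum_range_succ]
  have hlast : ((n:ℝ)+1)^m * (((n+1:ℕ):ℝ)^m - ((n:ℝ)+1)^m) = 0 := by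
    push_cast; rw [sub_self, mul_zero]
  rw [hlast, add_zero]
  apply Finset.sum_le_sum
  intro j hj
  rw [Finset.mem_range] at hj
  have h0 : (0:ℝ) < ((j:ℝ)+1) ^ m := Real.rpow_pos_of_pos (by positivity) m
  have h1 : ((n:ℕ):ℝ) ^ m ≤ ((n+1:ℕ):ℝ) ^ m := by
    apply Real.rpow_le_rpow (by positivity) (by push_cast; linarith) hm.le
  nlinarith

lemma T_lb (hm : 0 < m) (n : ℕ) : ((n:ℝ)+1)^m - 1 ≤ T m (n+1) := by
  have h0 : (0:ℕ) ∈ Finset.range (n+1) := by simp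
  have key := Finset.single_le_sum (f := fun j : ℕ =>
    ((j:ℝ)+1)^m * (((n+1:ℕ):ℝ)^m - ((j:ℝ)+1)^m)) ?_ h0
  · rw [T]
    refine le_trans ?_ key
    push_cast
    rw [zero_add, Real.one_rpow, one_mul]
  · intro j hj
    rw [Finset.mem_range] at hj
    have h0' : (0:ℝ) < ((j:ℝ)+1) ^ m := Real.rpow_pos_of_pos (by positivity) m
    have h1 : ((j:ℝ)+1) ^ m ≤ ((n+1:ℕ):ℝ) ^ m := by
      apply Real.rpow_le_rpow (by positivity) _ hm.le
      push_cast
      have : (j:ℝ) + 1 ≤ (n:ℝ) + 1 := by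
        have : (j:ℝ) ≤ (n:ℝ) := by exact_mod_cast Nat.lt_succ_iff.mp hj
        linarith
      linarith
    nlinarith

lemma S_tendsto (hm : 0 < m) :
    Tendsto (fun n : ℕ => S m n / (n:ℝ)) atTop (nhds (m/(m+1))) := by
  have key : ∀ᶠ n : ℕ in atTop, S m n / (n:ℝ) =
      1 - (∑ j ∈ Finset.range n, ((j:ℝ)+1)^m) / (n:ℝ)^(m+1) := by
    filter_upwards [eventually_ge_atTop 1] with n hn
    have hn0 : (0:ℝ) < (n:ℝ) := by exact_mod_cast Nat.pos_of_ne_zero (by omega)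
    have hnm : (0:ℝ) < (n:ℝ)^m := Real.rpow_pos_of_pos hn0 m
    have hsplit : (n:ℝ)^(m+1) = (n:ℝ)^m * (n:ℝ) := by
      rw [Real.rpow_add hn0, Real.rpow_one]
    rw [S, Finset.sum_sub_distrib, Finset.sum_const, Finset.card_range, ← Finset.sum_div,
      hsplit]
    field_simp
    ring
  rw [tendsto_congr' key]
  have h1 := (sum_rpow_tendsto hm.le).const_sub 1
  have : m/(m+1) = 1 - 1/(m+1) := by
    field_simp
    ring
  rw [this]
  exact h1

lemma T_tendsto (hm : 0 < m) :
    Tendsto (fun n : ℕ => T m n / (n:ℝ)^(2*m+1)) atTop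
      (nhds (m/((m+1)*(2*m+1)))) := by
  have key : ∀ᶠ n : ℕ in atTop, T m n / (n:ℝ)^(2*m+1) =
      (∑ j ∈ Finset.range n, ((j:ℝ)+1)^m) / (n:ℝ)^(m+1)
      - (∑ j ∈ Finset.range n, ((j:ℝ)+1)^(2*m)) / (n:ℝ)^(2*m+1) := by
    filter_upwards [eventually_ge_atTop 1] with n hn
    have hn0 : (0:ℝ) < (n:ℝ) := by exact_mod_cast Nat.pos_of_ne_zero (by omega)
    have hnm : (0:ℝ) < (n:ℝ)^m := Real.rpow_pos_of_pos hn0 m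
    have hnm1 : (0:ℝ) < (n:ℝ)^(m+1) := Real.rpow_pos_of_pos hn0 (m+1)
    have hnm2 : (0:ℝ) < (n:ℝ)^(2*m+1) := Real.rpow_pos_of_pos hn0 (2*m+1)
    have hTn : T m n = (n:ℝ)^m * (∑ j ∈ Finset.range n, ((j:ℝ)+1)^m)
        - ∑ j ∈ Finset.range n, ((j:ℝ)+1)^(2*m) := by
      rw [T, Finset.mul_sum, ← Finset.sum_sub_distrib]
      apply Finset.sum_congr rfl
      intro j hj
      have hj0 : (0:ℝ) < (j:ℝ)+1 := by positivity
      have : ((j:ℝ)+1)^(2*m) = ((j:ℝ)+1)^m * ((j:ℝ)+1)^m := by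
        rw [← Real.rpow_add hj0]; ring_nf
      rw [this]; ring
    have hsplit : (n:ℝ)^(2*m+1) = (n:ℝ)^m * (n:ℝ)^(m+1) := by
      rw [← Real.rpow_add hn0]; ring_nf
    rw [hTn, hsplit]
    field_simp
  rw [tendsto_congr' key]
  have h1 := (sum_rpow_tendsto hm.le).sub
    (sum_rpow_tendsto (by linarith : (0:ℝ) ≤ 2*m))
  have hval : m/((m+1)*(2*m+1)) = 1/(m+1) - 1/(2*m+1) := by
    field_simp
    ring
  rw [hval]
  exact h1

lemma pointwise_bound (hε : 0 < ε) {a μ : ℝ} (ha : 0 < a) (hμ : 0 < μ)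
    {σ : ℝ} (hσ : 0 ≤ σ) :
    σ * ε^2 / (σ + ε^2) ≤
      ε^2 * max (1 - a/μ) 0 + a^2/μ^2 * (σ - ε^2/a * max (μ - a) 0) := by
  have hq : (0:ℝ) < ε^2 := by positivity
  have ht : (0:ℝ) < σ + ε^2 := by linarith
  rcases le_or_gt μ a with h | h
  · rw [max_eq_right (by rw [sub_nonpos, le_div_iff₀ hμ]; nlinarith),
      max_eq_right (by linarith)]
    have h1 : σ * ε^2 / (σ + ε^2) ≤ σ := by
      rw [div_le_iff₀ ht]; nlinarith
    have h2 : (1:ℝ) ≤ a^2/μ^2 := by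
      rw [le_div_iff₀ (by positivity)]; nlinarith
    calc σ*ε^2/(σ+ε^2) ≤ σ := h1
      _ ≤ a^2/μ^2 * σ := by nlinarith
      _ = ε^2 * 0 + a^2/μ^2*(σ - ε^2/a*0) := by ring
  · rw [max_eq_left (by rw [sub_nonneg, div_le_one hμ]; linarith),
      max_eq_left (by linarith)]
    rw [div_le_iff₀ ht]
    have key : 0 ≤ a * (a*(σ+ε^2) - ε^2*μ)^2 := by positivity
    have ha' : a ≠ 0 := ha.ne'
    have hμ' : μ ≠ 0 := hμ.ne'
    have expand : (ε^2 * (1 - a/μ) + a^2/μ^2 * (σ - ε^2/a * (μ-a))) * (σ+ε^2) - σ*ε^2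
        = (a*(σ+ε^2) - ε^2*μ)^2 / μ^2 := by
      field_simp
      ring
    have hpos : 0 ≤ (a*(σ+ε^2) - ε^2*μ)^2 / μ^2 := by positivity
    linarith [expand, hpos]

lemma a_sq (j : ℕ) : (((j:ℝ)+1)^m)^2 = ((j:ℝ)+1)^(2*m) := by
  rw [sq, ← Real.rpow_add (by positivity)]
  ring_nf

lemma one_le_a (hm : 0 < m) (j : ℕ) : (1:ℝ) ≤ ((j:ℝ)+1)^m := by
  calc (1:ℝ) = 1 ^ m := (Real.one_rpow m).symm
    _ ≤ ((j:ℝ)+1)^m := Real.rpow_le_rpow zero_le_one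
        (by have := Nat.cast_nonneg (α := ℝ) j; linarith) hm.le

lemma star_val {q A μ : ℝ} (hq : 0 < q) (hA : 0 < A) (hμ : 0 < μ) :
    q / A * (μ - A) * q / (q / A * (μ - A) + q) = q * (1 - A / μ) := by
  have h1 : q / A * (μ - A) + q = q * μ / A := by field_simp; ring
  rw [h1]
  field_simp

lemma sandwich {m c ε : ℝ} {n : ℕ} (hm : 0 < m) (hc : 0 < c) (hε : 0 < ε)
    (hn : 1 ≤ n) (hT : ε^2 * T m n ≤ c^2 / Real.pi^(2*m)) :
    ε^2 * S m n ≤ estVal m c ε ∧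
      estVal m c ε ≤ ε^2 * S m n + (c^2/Real.pi^(2*m) - ε^2 * T m n)/((n:ℝ)^m)^2 := by
  set q : ℝ := ε^2 with hq_def
  set Q : ℝ := c^2 / Real.pi^(2*m) with hQ_def
  set μ : ℝ := (n:ℝ)^m with hμ_def
  set a : ℕ → ℝ := fun j => ((j:ℝ)+1)^m with ha_def
  have hq : 0 < q := by positivity
  have hn0 : (0:ℝ) < (n:ℝ) := by exact_mod_cast hn
  have hμ : 0 < μ := Real.rpow_pos_of_pos hn0 m
  have ha : ∀ j, 0 < a j := fun j => Real.rpow_pos_of_pos (by positivity) m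
  have hQ0 : 0 < Q := by
    rw [hQ_def]
    exact div_pos (pow_pos hc 2) (Real.rpow_pos_of_pos Real.pi_pos _)
  have hout : ∀ j, n ≤ j → μ ≤ a j := by
    intro j hj
    apply Real.rpow_le_rpow hn0.le _ hm.le
    have : (n:ℝ) ≤ (j:ℝ) := by exact_mod_cast hj
    linarith
  have hin : ∀ j < n, a j ≤ μ := by
    intro j hj
    apply Real.rpow_le_rpow (by positivity) _ hm.le
    exact_mod_cast hj
  -- the candidate maximizer
  set σs : ℕ → ℝ := fun j => q / a j * max (μ - a j) 0 with hσs_def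
  have hσs_nonneg : ∀ j, 0 ≤ σs j :=
    fun j => mul_nonneg (by positivity) (le_max_right _ _)
  have hσs_zero : ∀ j, n ≤ j → σs j = 0 := by
    intro j hj
    have : max (μ - a j) 0 = 0 := max_eq_right (by linarith [hout j hj])
    simp [hσs_def, this]
  -- value of σs
  have hσs_val : ∑' j : ℕ, σs j * ε ^ 2 / (σs j + ε ^ 2) = q * S m n := by
    rw [tsum_eq_sum (s := Finset.range n) (by
      intro j hj
      rw [Finset.mem_range, not_lt] at hj
      rw [hσs_zero j hj]
      simp)]
    rw [S, Finset.mul_sum]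
    apply Finset.sum_congr rfl
    intro j hj
    rw [Finset.mem_range] at hj
    have h1 : σs j = q / a j * (μ - a j) := by
      rw [hσs_def]
      simp only
      rw [max_eq_left (by linarith [hin j hj])]
    rw [h1, ← hq_def]
    exact star_val hq (ha j) hμ
  -- admissibility of σs
  have hσs_adm : Admissible m c σs := by
    refine ⟨hσs_nonneg, ?_, ?_⟩
    · apply summable_of_ne_finset_zero (s := Finset.range n)
      intro j hj
      rw [Finset.mem_range, not_lt] at hj
      rw [hσs_zero j hj, mul_zero]
    · rw [tsum_eq_sum (s := Finset.range n) (by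
        intro j hj
        rw [Finset.mem_range, not_lt] at hj
        rw [hσs_zero j hj, mul_zero])]
      rw [← hQ_def]
      refine le_trans (le_of_eq ?_) hT
      rw [T, Finset.mul_sum]
      apply Finset.sum_congr rfl
      intro j hj
      rw [Finset.mem_range] at hj
      have h1 : σs j = q / a j * (μ - a j) := by
        rw [hσs_def]
        simp only
        rw [max_eq_left (by linarith [hin j hj])]
      rw [h1, ← a_sq j]
      have := (ha j).ne'
      field_simp
      ring
  -- upper bound for all admissible σ
  have claim_ub : ∀ r ∈ { r | ∃ σ2, Admissible m c σ2 ∧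
      r = ∑' j : ℕ, σ2 j * ε ^ 2 / (σ2 j + ε ^ 2) },
      r ≤ q * S m n + (Q - q * T m n)/μ^2 := by
    rintro r ⟨σ2, ⟨hσ0, hσsum, hσle⟩, rfl⟩
    have hsum_a2σ : Summable (fun j => a j^2 * σ2 j) := by
      apply hσsum.congr
      intro j
      rw [a_sq j]
    set F : ℕ → ℝ := fun j => σ2 j * ε ^ 2 / (σ2 j + ε ^ 2) with hF_def
    have hF_le : ∀ j, F j ≤ a j^2 * σ2 j := by
      intro j
      have ht : 0 < σ2 j + ε^2 := by have := hσ0 j; positivity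
      have h1 : F j ≤ σ2 j := by
        rw [hF_def]
        simp only
        rw [div_le_iff₀ ht]
        nlinarith [hσ0 j, hq]
      have h2 : σ2 j ≤ a j ^2 * σ2 j := by
        have h1a : (1:ℝ) ≤ a j := one_le_a hm j
        have hsq : (1:ℝ) ≤ a j ^ 2 := by nlinarith
        have := mul_le_mul_of_nonneg_right hsq (hσ0 j)
        linarith
      linarith
    have hF_nonneg : ∀ j, 0 ≤ F j := by
      intro j
      have ht : 0 < σ2 j + ε^2 := by have := hσ0 j; positivity
      have := hσ0 j
      positivity
    have hFsum : Summable F := Summable.of_nonneg_of_le hF_nonneg hF_le hsum_a2σ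
    set g1 : ℕ → ℝ := fun j => q * max (1 - a j/μ) 0 with hg1_def
    set g2 : ℕ → ℝ := fun j => 1/μ^2 * (a j^2 * σ2 j) with hg2_def
    set g3 : ℕ → ℝ := fun j => a j^2/μ^2 * (q/a j * max (μ - a j) 0) with hg3_def
    have hg1_zero : ∀ j ∉ Finset.range n, g1 j = 0 := by
      intro j hj
      rw [Finset.mem_range, not_lt] at hj
      have h1 : (1:ℝ) - a j/μ ≤ 0 := by
        rw [sub_nonpos, le_div_iff₀ hμ]
        nlinarith [hout j hj]
      rw [hg1_def]
      simp only
      rw [max_eq_right h1, mul_zero]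
    have hg3_zero : ∀ j ∉ Finset.range n, g3 j = 0 := by
      intro j hj
      rw [Finset.mem_range, not_lt] at hj
      have : max (μ - a j) 0 = 0 := max_eq_right (by linarith [hout j hj])
      rw [hg3_def]
      simp only
      rw [this, mul_zero, mul_zero]
    have hg1s : Summable g1 := summable_of_ne_finset_zero hg1_zero
    have hg3s : Summable g3 := summable_of_ne_finset_zero hg3_zero
    have hg2s : Summable g2 := hsum_a2σ.mul_left _
    have hFG : ∀ j, F j ≤ g1 j + (g2 j - g3 j) := by
      intro j
      have hpb := pointwise_bound hε (ha j) hμ (hσ0 j)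
      have : g1 j + (g2 j - g3 j)
          = ε^2 * max (1 - a j/μ) 0 + a j^2/μ^2 * (σ2 j - ε^2/a j * max (μ - a j) 0) := by
        rw [hg1_def, hg2_def, hg3_def, ← hq_def]
        simp only
        ring
      rw [this]
      exact hpb
    have hstep : (∑' j, F j) ≤ ∑' j, (g1 j + (g2 j - g3 j)) :=
      Summable.tsum_le_tsum hFG hFsum (hg1s.add (hg2s.sub hg3s))
    have hsplit : (∑' j, (g1 j + (g2 j - g3 j)))
        = (∑' j, g1 j) + ((∑' j, g2 j) - ∑' j, g3 j) := by
      rw [Summable.tsum_add hg1s (hg2s.sub hg3s), Summable.tsum_sub hg2s hg3s]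
    have hv1 : (∑' j, g1 j) = q * S m n := by
      rw [tsum_eq_sum (s := Finset.range n) hg1_zero, S, Finset.mul_sum]
      apply Finset.sum_congr rfl
      intro j hj
      rw [Finset.mem_range] at hj
      rw [hg1_def]
      simp only
      rw [max_eq_left (by rw [sub_nonneg, div_le_one hμ]; exact hin j hj)]
    have hv3 : (∑' j, g3 j) = q/μ^2 * T m n := by
      rw [tsum_eq_sum (s := Finset.range n) hg3_zero, T, Finset.mul_sum]
      apply Finset.sum_congr rfl
      intro j hj
      rw [Finset.mem_range] at hj
      rw [hg3_def]
      simp only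
      rw [max_eq_left (by linarith [hin j hj])]
      have := (ha j).ne'
      field_simp
      ring
    have hv2 : (∑' j, g2 j) ≤ 1/μ^2 * Q := by
      rw [hg2_def, tsum_mul_left]
      apply mul_le_mul_of_nonneg_left _ (by positivity)
      refine le_trans (le_of_eq ?_) hσle
      apply tsum_congr
      intro j
      rw [a_sq j]
    calc (∑' j, F j) ≤ (∑' j, g1 j) + ((∑' j, g2 j) - ∑' j, g3 j) := by
          rw [← hsplit]; exact hstep
      _ ≤ q * S m n + (1/μ^2 * Q - q/μ^2 * T m n) := by
          have := hv1
          have := hv3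
          have := hv2
          linarith
      _ = q * S m n + (Q - q * T m n)/μ^2 := by ring
  have hbdd : BddAbove { r | ∃ σ2, Admissible m c σ2 ∧
      r = ∑' j : ℕ, σ2 j * ε ^ 2 / (σ2 j + ε ^ 2) } :=
    ⟨q * S m n + (Q - q * T m n)/μ^2, fun r hr => claim_ub r hr⟩
  constructor
  · apply le_csSup hbdd
    exact ⟨σs, hσs_adm, hσs_val.symm⟩
  · apply Real.sSup_le claim_ub
    have h1 : 0 ≤ q * S m n := mul_nonneg hq.le (S_nonneg hm n)
    have h2 : 0 ≤ (Q - q * T m n)/μ^2 := by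
      apply div_nonneg _ (by positivity)
      linarith [hT]
    linarith

/-- the cutoff index -/
def Ncut (m c : ℝ) (ε : ℝ) : ℕ := sInf {n : ℕ | c^2/Real.pi^(2*m) < ε^2 * T m (n+1)}

variable {c ε : ℝ}

lemma Q_pos (hc : 0 < c) : 0 < c^2/Real.pi^(2*m) :=
  div_pos (pow_pos hc 2) (Real.rpow_pos_of_pos Real.pi_pos _)

lemma Ncut_nonempty (hm : 0 < m) (hε : 0 < ε) :
    {n : ℕ | c^2/Real.pi^(2*m) < ε^2 * T m (n+1)}.Nonempty := by
  have hgrow : Tendsto (fun n : ℕ => ((n:ℝ)+1)^m) atTop atTop :=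
    (tendsto_rpow_atTop hm).comp
      (tendsto_atTop_add_const_right atTop 1 tendsto_natCast_atTop_atTop)
  obtain ⟨n, hn⟩ := (hgrow.eventually_ge_atTop (c^2/Real.pi^(2*m)/ε^2 + 2)).exists
  refine ⟨n, ?_⟩
  have h1 := T_lb hm n
  have h2 : c^2/Real.pi^(2*m)/ε^2 < T m (n+1) := by linarith
  have hq : (0:ℝ) < ε^2 := by positivity
  rw [Set.mem_setOf_eq]
  rw [div_lt_iff₀ hq] at h2
  linarith [h2, mul_comm (T m (n+1)) (ε^2)]

lemma Ncut_spec (hm : 0 < m) (hε : 0 < ε) :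
    c^2/Real.pi^(2*m) < ε^2 * T m (Ncut m c ε + 1) :=
  Nat.sInf_mem (Ncut_nonempty hm hε)

lemma T_one : T m 1 = 0 := by
  simp [T, Finset.sum_range_one, Real.one_rpow]

lemma Ncut_le (hm : 0 < m) (hc : 0 < c) (hε : 0 < ε) :
    ε^2 * T m (Ncut m c ε) ≤ c^2/Real.pi^(2*m) := by
  rcases Nat.eq_zero_or_pos (Ncut m c ε) with h | h
  · rw [h]
    have hT0 : T m 0 = 0 := by simp [T]
    rw [hT0, mul_zero]
    exact (Q_pos hc).le
  · obtain ⟨k, hk⟩ : ∃ k, Ncut m c ε = k + 1 := ⟨_, (Nat.succ_pred_eq_of_pos h).symm⟩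
    have hk' : k < Ncut m c ε := by omega
    have hnot := Nat.notMem_of_lt_sInf hk'
    rw [Set.mem_setOf_eq, not_lt] at hnot
    rw [hk]
    exact hnot

lemma Ncut_pos (hm : 0 < m) (hc : 0 < c) (hε : 0 < ε) : 1 ≤ Ncut m c ε := by
  by_contra h
  push_neg at h
  have h0 : Ncut m c ε = 0 := by omega
  have hs := Ncut_spec (c := c) hm hε
  rw [h0, zero_add, T_one, mul_zero] at hs
  exact absurd hs (not_lt.mpr (Q_pos hc).le)

lemma Ncut_tendsto (hm : 0 < m) (hc : 0 < c) :
    Tendsto (fun ε => Ncut m c ε) (nhdsWithin 0 (Set.Ioi 0)) atTop := by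
  rw [tendsto_atTop]
  intro b
  have hTb1 : (0:ℝ) < T m b + 1 := by linarith [T_nonneg hm b]
  have hQ0 := Q_pos (m := m) hc
  have hcont : Tendsto (fun ε : ℝ => ε^2) (nhdsWithin 0 (Set.Ioi 0)) (nhds 0) := by
    have h2 : Tendsto (fun ε : ℝ => ε^2) (nhds 0) (nhds 0) := by
      simpa using (continuous_pow 2).tendsto (0:ℝ)
    exact h2.mono_left nhdsWithin_le_nhds
  have hev : ∀ᶠ ε in nhdsWithin 0 (Set.Ioi 0),
      ε^2 < c^2/Real.pi^(2*m)/(T m b + 1) :=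
    hcont.eventually_lt_const (by positivity)
  filter_upwards [hev, self_mem_nhdsWithin] with ε hε2 hεpos
  apply le_csInf (Ncut_nonempty hm hεpos)
  intro x hx
  by_contra hxb
  push_neg at hxb
  rw [Set.mem_setOf_eq] at hx
  have hmono : T m (x+1) ≤ T m b := T_mono hm (by omega)
  have h3 : ε^2 * (T m b + 1) < c^2/Real.pi^(2*m) := by
    rw [lt_div_iff₀ hTb1] at hε2
    linarith
  have h4 : ε^2 * T m (x+1) ≤ ε^2 * T m b :=
    mul_le_mul_of_nonneg_left hmono (by positivity)
  have h5 : ε^2*(T m b + 1) = ε^2 * T m b + ε^2 := by ring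
  have h6 : (0:ℝ) ≤ ε^2 := by positivity
  linarith

lemma T_succ_tendsto (hm : 0 < m) :
    Tendsto (fun n : ℕ => T m (n+1) / (n:ℝ)^(2*m+1)) atTop
      (nhds (m/((m+1)*(2*m+1)))) := by
  have h1 : Tendsto (fun n : ℕ => T m (n+1) / (((n+1:ℕ)):ℝ)^(2*m+1)) atTop
      (nhds (m/((m+1)*(2*m+1)))) :=
    (T_tendsto hm).comp (tendsto_add_atTop_nat 1)
  have h2 := tendsto_succ_div_rpow (2*m+1)
  have key : ∀ᶠ n : ℕ in atTop, T m (n+1) / (n:ℝ)^(2*m+1)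
      = (T m (n+1) / (((n+1:ℕ)):ℝ)^(2*m+1)) * ((((n:ℝ)+1))/(n:ℝ))^(2*m+1) := by
    filter_upwards [eventually_ge_atTop 1] with n hn
    have hn0 : (0:ℝ) < (n:ℝ) := by exact_mod_cast Nat.pos_of_ne_zero (by omega)
    have e1 : (((n:ℝ)+1)/(n:ℝ))^(2*m+1) = ((n:ℝ)+1)^(2*m+1) / (n:ℝ)^(2*m+1) :=
      Real.div_rpow (by positivity) hn0.le _
    have hb1 : ((n:ℝ)+1)^(2*m+1) ≠ 0 := (Real.rpow_pos_of_pos (by positivity) _).ne'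
    have hb2 : (n:ℝ)^(2*m+1) ≠ 0 := (Real.rpow_pos_of_pos hn0 _).ne'
    push_cast
    rw [e1]
    field_simp
  rw [tendsto_congr' key]
  have := h1.mul h2
  simpa using this

lemma main_identity (hm : 0 < m) (hε : 0 < ε) {n : ℕ} (hn : 1 ≤ n) :
    (ε^2 * (n:ℝ)^(2*m+1)) ^ (1/(2*m+1)) = ε ^ (-(4*m)/(2*m+1)) * ε^2 * (n:ℝ) := by
  have hk : (0:ℝ) < 2*m+1 := by linarith
  have hn0 : (0:ℝ) < (n:ℝ) := by exact_mod_cast hn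
  have h1 : (ε^2 * (n:ℝ)^(2*m+1)) ^ (1/(2*m+1))
      = (ε^2)^(1/(2*m+1)) * ((n:ℝ)^(2*m+1))^(1/(2*m+1)) :=
    Real.mul_rpow (by positivity) (Real.rpow_pos_of_pos hn0 _).le
  have h2 : ((n:ℝ)^(2*m+1))^(1/(2*m+1)) = (n:ℝ) := by
    rw [← Real.rpow_mul hn0.le, mul_one_div, div_self hk.ne', Real.rpow_one]
  have h3 : (ε^2)^(1/(2*m+1)) = ε ^ (2/(2*m+1)) := by
    rw [← Real.rpow_natCast ε 2, ← Real.rpow_mul hε.le]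
    congr 1
    push_cast
    ring
  have h4 : ε ^ (-(4*m)/(2*m+1)) * ε^2 = ε ^ (2/(2*m+1)) := by
    rw [← Real.rpow_natCast ε 2, ← Real.rpow_add hε]
    congr 1
    field_simp
    ring
  rw [h1, h2, h3, ← h4]

lemma const_eq (hm : 0 < m) (hc : 0 < c) :
    ((c^2/Real.pi^(2*m)) / (m/((m+1)*(2*m+1)))) ^ (1/(2*m+1)) * (m/(m+1))
      = pinskerConstant m c := by
  have hm1 : (0:ℝ) < m+1 := by linarith
  have hk : (0:ℝ) < 2*m+1 := by linarith
  have hπ : (0:ℝ) < Real.pi ^ (2*m) := Real.rpow_pos_of_pos Real.pi_pos _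
  have hbase : (c^2/Real.pi^(2*m)) / (m/((m+1)*(2*m+1)))
      = (c^2*(2*m+1)/Real.pi^(2*m)) * ((m+1)/m) := by
    field_simp
  have hA : (0:ℝ) ≤ c^2*(2*m+1)/Real.pi^(2*m) := by positivity
  have hx : (0:ℝ) < m/(m+1) := div_pos hm hm1
  rw [hbase, Real.mul_rpow hA (by positivity), pinskerConstant]
  have h5 : ((m+1)/m) ^ (1/(2*m+1)) = (m/(m+1)) ^ (-(1/(2*m+1))) := by
    rw [Real.rpow_neg hx.le, ← Real.inv_rpow hx.le, inv_div]
  rw [h5, mul_assoc]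
  congr 1
  calc (m/(m+1)) ^ (-(1/(2*m+1))) * (m/(m+1))
      = (m/(m+1)) ^ (-(1/(2*m+1)) + 1) := (Real.rpow_add_one hx.ne' _).symm
    _ = (m/(m+1)) ^ (2*m/(2*m+1)) := by
        congr 1
        field_simp
        ring

end PinskerAux

open PinskerAux

/-- **Pinsker asymptotics of the estimation-error value:**
`lim_{ε→0} ε^{−4m/(2m+1)} R_ε(m,c) = P_{m,c}`. -/
theorem estVal_tendsto_pinsker (m c : ℝ) (hm : 0 < m) (hc : 0 < c) :
    Tendsto (fun ε : ℝ => ε ^ (-(4 * m) / (2 * m + 1)) * estVal m c ε)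
      (nhdsWithin 0 (Set.Ioi 0)) (nhds (pinskerConstant m c)) := by
  have hk : (0:ℝ) < 2*m+1 := by linarith
  have hκ : (0:ℝ) < m/((m+1)*(2*m+1)) := div_pos hm (by nlinarith)
  have hQ0 : (0:ℝ) < c^2/Real.pi^(2*m) := Q_pos hc
  have hQκ : (0:ℝ) < (c^2/Real.pi^(2*m)) / (m/((m+1)*(2*m+1))) := div_pos hQ0 hκ
  have hNtop : Tendsto (fun ε => Ncut m c ε) (nhdsWithin 0 (Set.Ioi 0)) atTop :=
    Ncut_tendsto hm hc
  have hr0 : Tendsto (fun ε => T m (Ncut m c ε) / ((Ncut m c ε :ℝ))^(2*m+1))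
      (nhdsWithin 0 (Set.Ioi 0)) (nhds (m/((m+1)*(2*m+1)))) :=
    (T_tendsto hm).comp hNtop
  have hr1 : Tendsto (fun ε => T m (Ncut m c ε + 1) / ((Ncut m c ε :ℝ))^(2*m+1))
      (nhdsWithin 0 (Set.Ioi 0)) (nhds (m/((m+1)*(2*m+1)))) :=
    (T_succ_tendsto hm).comp hNtop
  have hS : Tendsto (fun ε => S m (Ncut m c ε) / (Ncut m c ε :ℝ))
      (nhdsWithin 0 (Set.Ioi 0)) (nhds (m/(m+1))) :=
    (S_tendsto hm).comp hNtop
  -- basic facts for each ε > 0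
  have hfacts : ∀ ε : ℝ, 0 < ε → 1 ≤ Ncut m c ε ∧
      (0:ℝ) < (Ncut m c ε : ℝ) ∧ 0 < T m (Ncut m c ε + 1) := by
    intro ε hε
    have h1 := Ncut_pos (m := m) (c := c) hm hc hε
    have h2 : (0:ℝ) < (Ncut m c ε : ℝ) := by exact_mod_cast h1
    have hspec := Ncut_spec (m := m) (c := c) hm hε
    have h3 : 0 < T m (Ncut m c ε + 1) := by nlinarith [sq_nonneg ε]
    exact ⟨h1, h2, h3⟩
  -- convergence of ρ ε = ε² N^{2m+1}
  have hρ : Tendsto (fun ε => ε^2 * ((Ncut m c ε :ℝ))^(2*m+1))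
      (nhdsWithin 0 (Set.Ioi 0))
      (nhds ((c^2/Real.pi^(2*m)) / (m/((m+1)*(2*m+1))))) := by
    have hlowlim : Tendsto (fun ε => (c^2/Real.pi^(2*m)) /
        (T m (Ncut m c ε + 1) / ((Ncut m c ε :ℝ))^(2*m+1)))
        (nhdsWithin 0 (Set.Ioi 0))
        (nhds ((c^2/Real.pi^(2*m)) / (m/((m+1)*(2*m+1))))) :=
      tendsto_const_nhds.div hr1 hκ.ne'
    have huplim : Tendsto (fun ε => (c^2/Real.pi^(2*m)) /
        (T m (Ncut m c ε) / ((Ncut m c ε :ℝ))^(2*m+1)))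
        (nhdsWithin 0 (Set.Ioi 0))
        (nhds ((c^2/Real.pi^(2*m)) / (m/((m+1)*(2*m+1))))) :=
      tendsto_const_nhds.div hr0 hκ.ne'
    apply tendsto_of_tendsto_of_tendsto_of_le_of_le' hlowlim huplim
    · filter_upwards [self_mem_nhdsWithin] with ε hεp
      rw [Set.mem_Ioi] at hεp
      obtain ⟨hn1, hn0, hT1⟩ := hfacts ε hεp
      have hpow : (0:ℝ) < ((Ncut m c ε :ℝ))^(2*m+1) := Real.rpow_pos_of_pos hn0 _
      have hrat : (0:ℝ) < T m (Ncut m c ε + 1) / ((Ncut m c ε :ℝ))^(2*m+1) :=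
        div_pos hT1 hpow
      rw [div_le_iff₀ hrat]
      have he : ε^2 * ((Ncut m c ε :ℝ))^(2*m+1) *
          (T m (Ncut m c ε + 1) / ((Ncut m c ε :ℝ))^(2*m+1))
          = ε^2 * T m (Ncut m c ε + 1) := by
        field_simp
      rw [he]
      exact (Ncut_spec hm hεp).le
    · filter_upwards [hr0.eventually (eventually_gt_nhds hκ), self_mem_nhdsWithin]
        with ε hrpos hεp
      rw [Set.mem_Ioi] at hεp
      obtain ⟨hn1, hn0, hT1⟩ := hfacts ε hεp
      rw [le_div_iff₀ hrpos]
      have he : ε^2 * ((Ncut m c ε :ℝ))^(2*m+1) *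
          (T m (Ncut m c ε) / ((Ncut m c ε :ℝ))^(2*m+1))
          = ε^2 * T m (Ncut m c ε) := by
        field_simp
      rw [he]
      exact Ncut_le hm hc hεp
  have hrpowρ : Tendsto (fun ε => (ε^2 * ((Ncut m c ε :ℝ))^(2*m+1))^(1/(2*m+1)))
      (nhdsWithin 0 (Set.Ioi 0))
      (nhds (((c^2/Real.pi^(2*m)) / (m/((m+1)*(2*m+1))))^(1/(2*m+1)))) := by
    have hcont : ContinuousAt (fun x : ℝ => x^(1/(2*m+1)))
        ((c^2/Real.pi^(2*m)) / (m/((m+1)*(2*m+1)))) :=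
      Real.continuousAt_rpow_const _ _ (Or.inl hQκ.ne')
    exact hcont.tendsto.comp hρ
  -- L and E
  set L : ℝ → ℝ := fun ε => (ε^2 * ((Ncut m c ε :ℝ))^(2*m+1))^(1/(2*m+1)) *
    (S m (Ncut m c ε) / (Ncut m c ε :ℝ)) with hLdef
  set E : ℝ → ℝ := fun ε => (ε^2 * ((Ncut m c ε :ℝ))^(2*m+1))^(1/(2*m+1)) *
    ((T m (Ncut m c ε + 1) - T m (Ncut m c ε)) / ((Ncut m c ε :ℝ))^(2*m+1)) with hEdef
  have hL : Tendsto L (nhdsWithin 0 (Set.Ioi 0)) (nhds (pinskerConstant m c)) := by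
    have := hrpowρ.mul hS
    rwa [const_eq hm hc] at this
  have hE : Tendsto E (nhdsWithin 0 (Set.Ioi 0)) (nhds 0) := by
    have hdiff : Tendsto (fun ε => (T m (Ncut m c ε + 1) - T m (Ncut m c ε)) /
        ((Ncut m c ε :ℝ))^(2*m+1)) (nhdsWithin 0 (Set.Ioi 0)) (nhds 0) := by
      have heq : (fun ε => (T m (Ncut m c ε + 1) - T m (Ncut m c ε)) /
          ((Ncut m c ε :ℝ))^(2*m+1))
          = fun ε => T m (Ncut m c ε + 1) / ((Ncut m c ε :ℝ))^(2*m+1)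
            - T m (Ncut m c ε) / ((Ncut m c ε :ℝ))^(2*m+1) := by
        funext ε
        rw [sub_div]
      rw [heq]
      simpa using hr1.sub hr0
    have := hrpowρ.mul hdiff
    rwa [mul_zero] at this
  have hLE : Tendsto (fun ε => L ε + E ε) (nhdsWithin 0 (Set.Ioi 0))
      (nhds (pinskerConstant m c)) := by
    have := hL.add hE
    rwa [add_zero] at this
  apply tendsto_of_tendsto_of_tendsto_of_le_of_le' hL hLE
  · -- L ε ≤ φ ε
    filter_upwards [self_mem_nhdsWithin] with ε hεp
    rw [Set.mem_Ioi] at hεp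
    obtain ⟨hn1, hn0, hT1⟩ := hfacts ε hεp
    have hsand := sandwich hm hc hεp hn1 (Ncut_le hm hc hεp)
    have hP : (0:ℝ) < ε ^ (-(4*m)/(2*m+1)) := Real.rpow_pos_of_pos hεp _
    have hid := main_identity (m := m) hm hεp hn1 (n := Ncut m c ε)
    have hLeq : L ε = ε ^ (-(4*m)/(2*m+1)) * (ε^2 * S m (Ncut m c ε)) := by
      rw [hLdef]
      simp only
      rw [hid]
      field_simp
    rw [hLeq]
    calc ε ^ (-(4*m)/(2*m+1)) * (ε^2 * S m (Ncut m c ε))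
        ≤ ε ^ (-(4*m)/(2*m+1)) * estVal m c ε :=
          mul_le_mul_of_nonneg_left hsand.1 hP.le
      _ = ε ^ (-(4 * m) / (2 * m + 1)) * estVal m c ε := by ring_nf
  · -- φ ε ≤ L ε + E ε
    filter_upwards [self_mem_nhdsWithin] with ε hεp
    rw [Set.mem_Ioi] at hεp
    obtain ⟨hn1, hn0, hT1⟩ := hfacts ε hεp
    have hsand := sandwich hm hc hεp hn1 (Ncut_le hm hc hεp)
    have hspec := Ncut_spec (m := m) (c := c) hm hεp
    have hP : (0:ℝ) < ε ^ (-(4*m)/(2*m+1)) := Real.rpow_pos_of_pos hεp _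
    have hid := main_identity (m := m) hm hεp hn1 (n := Ncut m c ε)
    have hμ : (0:ℝ) < ((Ncut m c ε :ℝ))^m := Real.rpow_pos_of_pos hn0 _
    have e1 : (((Ncut m c ε :ℝ))^m)^2 = ((Ncut m c ε :ℝ))^(2*m) := by
      rw [sq, ← Real.rpow_add hn0]
      ring_nf
    have e2 : ((Ncut m c ε :ℝ))^(2*m+1) = ((Ncut m c ε :ℝ))^(2*m) * (Ncut m c ε :ℝ) := by
      rw [Real.rpow_add hn0, Real.rpow_one]
    have h2m : (0:ℝ) < ((Ncut m c ε :ℝ))^(2*m) := Real.rpow_pos_of_pos hn0 _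
    have hLeq : L ε = ε ^ (-(4*m)/(2*m+1)) * (ε^2 * S m (Ncut m c ε)) := by
      rw [hLdef]
      simp only
      rw [hid]
      field_simp
    have hEeq : E ε = ε ^ (-(4*m)/(2*m+1)) *
        (ε^2 * (T m (Ncut m c ε + 1) - T m (Ncut m c ε)) / (((Ncut m c ε :ℝ))^m)^2) := by
      rw [hEdef]
      simp only
      rw [hid, e1, e2]
      field_simp
    have hstep : estVal m c ε ≤ ε^2 * S m (Ncut m c ε) +
        ε^2 * (T m (Ncut m c ε + 1) - T m (Ncut m c ε)) / (((Ncut m c ε :ℝ))^m)^2 := by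
      refine le_trans hsand.2 ?_
      have hnum : c^2/Real.pi^(2*m) - ε^2 * T m (Ncut m c ε)
          ≤ ε^2 * (T m (Ncut m c ε + 1) - T m (Ncut m c ε)) := by
        have hr : ε^2 * (T m (Ncut m c ε + 1) - T m (Ncut m c ε))
            = ε^2 * T m (Ncut m c ε + 1) - ε^2 * T m (Ncut m c ε) := by ring
        rw [hr]
        linarith [hspec]
      gcongr
    calc ε ^ (-(4 * m) / (2 * m + 1)) * estVal m c ε
        ≤ ε ^ (-(4*m)/(2*m+1)) * (ε^2 * S m (Ncut m c ε) +
            ε^2 * (T m (Ncut m c ε + 1) - T m (Ncut m c ε)) / (((Ncut m c ε :ℝ))^m)^2) :=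
          mul_le_mul_of_nonneg_left hstep hP.le
      _ = L ε + E ε := by rw [hLeq, hEeq]; ring
end
end

section
/- Let m > 0 and c > 0, and let B_ε be bit budgets with B_ε → ∞ and B_ε · ε^{2/(2m+1)} → 0 as ε → 0. Then the quantization-error value satisfies lim_{ε→0} B_ε^{2m} · Q_ε(m,c,B_ε) = c² m^{2m} / π^{2m}. -/
open MeasureTheory Filter

noncomputable section

/-- The quantization-error value `Q_ε(m,c,B)`: the supremum over admissible `σ²` of the
infimum over `B`-feasible `μ²` of `∑_j μ_j²` (the infimum being over feasible `μ²` with a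
finite sum). -/
def quantVal (m c ε B : ℝ) : ℝ :=
  sSup { r | ∃ σ2, Admissible m c σ2 ∧
    r = sInf { s | ∃ μ2, BFeasible ε B σ2 μ2 ∧ Summable μ2 ∧ s = ∑' j : ℕ, μ2 j } }


section QuantAux
open Finset


open Finset

-- n^n ≤ n! * e^n
lemma aux_pow_le_factorial_mul_exp (n : ℕ) : (n : ℝ) ^ n ≤ n.factorial * Real.exp n := by
  induction n with
  | zero => simp
  | succ n ih =>
    have hstep : ((n + 1 : ℕ) : ℝ) ^ n ≤ (n : ℝ) ^ n * Real.exp 1 := by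
      rcases Nat.eq_zero_or_pos n with h | h
      · subst h; norm_num
      · have hn : (0:ℝ) < n := by exact_mod_cast h
        have h1 : ((n + 1 : ℕ) : ℝ) = (n : ℝ) * (1 + 1 / n) := by field_simp; norm_num
        have h2 : (1 + 1 / (n:ℝ)) ≤ Real.exp (1 / n) := by
          have := Real.add_one_le_exp (1 / (n:ℝ)); linarith
        have h3 : ((n:ℝ) * (1 + 1/n)) ^ n ≤ (n:ℝ)^n * Real.exp (1/n) ^ n := by
          rw [mul_pow]
          exact mul_le_mul_of_nonneg_left (pow_le_pow_left₀ (by positivity) h2 n)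
            (by positivity)
        have h4 : Real.exp (1/(n:ℝ)) ^ n = Real.exp 1 := by
          rw [← Real.exp_nat_mul, mul_one_div, div_self hn.ne']
        rw [h1]
        exact h3.trans (by rw [h4])
    calc ((n+1 : ℕ) : ℝ) ^ (n+1) = ((n+1:ℕ):ℝ) * ((n+1:ℕ):ℝ) ^ n := by ring
    _ ≤ ((n+1:ℕ):ℝ) * ((n : ℝ) ^ n * Real.exp 1) := by gcongr
    _ ≤ ((n+1:ℕ):ℝ) * ((n.factorial * Real.exp n) * Real.exp 1) := by
        gcongr
    _ = ((n+1:ℕ).factorial : ℝ) * Real.exp ((n+1 : ℕ) : ℝ) := by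
        rw [Nat.factorial_succ]
        push_cast
        rw [Real.exp_add]
        ring

-- n! ≤ e * n * (n/e)^n for 1 ≤ n
lemma aux_factorial_le (n : ℕ) (hn : 1 ≤ n) :
    (n.factorial : ℝ) ≤ Real.exp 1 * n * ((n : ℝ) / Real.exp 1) ^ n := by
  have he : (0:ℝ) < Real.exp 1 := Real.exp_pos 1
  induction n with
  | zero => omega
  | succ n ih =>
    rcases Nat.eq_zero_or_pos n with h | h
    · subst h
      norm_num [Nat.factorial]
    · have ihn := ih h
      have hn' : (0:ℝ) < n := by exact_mod_cast h
      -- key : e * n^(n+1) ≤ (n+1)^(n+1)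
      have hkey : Real.exp 1 * (n:ℝ) ^ (n+1) ≤ ((n:ℝ)+1) ^ (n+1) := by
        have hlog : Real.log ((n:ℝ) / ((n:ℝ)+1)) ≤ (n:ℝ)/((n:ℝ)+1) - 1 :=
          Real.log_le_sub_one_of_pos (by positivity)
        rw [Real.log_div (by positivity) (by positivity)] at hlog
        have hsub : (n:ℝ)/((n:ℝ)+1) - 1 = -(1/((n:ℝ)+1)) := by field_simp; ring
        rw [hsub] at hlog
        have h2 : 1/((n:ℝ)+1) ≤ Real.log ((n:ℝ)+1) - Real.log n := by linarith
        have h1 : (1:ℝ) ≤ ((n:ℝ)+1) * (Real.log ((n:ℝ)+1) - Real.log n) := by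
          calc (1:ℝ) = ((n:ℝ)+1) * (1/((n:ℝ)+1)) := by field_simp
          _ ≤ ((n:ℝ)+1) * (Real.log ((n:ℝ)+1) - Real.log n) := by gcongr
        have h2 : Real.log (Real.exp 1 * (n:ℝ)^(n+1)) ≤ Real.log (((n:ℝ)+1)^(n+1)) := by
          rw [Real.log_mul he.ne' (by positivity), Real.log_exp, Real.log_pow, Real.log_pow]
          push_cast
          nlinarith
        have := Real.exp_le_exp.2 h2
        rwa [Real.exp_log (by positivity), Real.exp_log (by positivity)] at this
      have hfact : (((n+1):ℕ).factorial : ℝ) = ((n:ℝ)+1) * n.factorial := by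
        rw [Nat.factorial_succ]; push_cast; ring
      rw [hfact]
      calc ((n:ℝ)+1) * n.factorial ≤ ((n:ℝ)+1) * (Real.exp 1 * n * ((n:ℝ)/Real.exp 1)^n) := by
            gcongr
      _ ≤ Real.exp 1 * (((n+1):ℕ) : ℝ) * ((((n+1):ℕ):ℝ)/Real.exp 1)^(n+1) := by
            have heq : ((n:ℝ)+1) * (Real.exp 1 * (n:ℝ) * ((n:ℝ)/Real.exp 1)^n)
                = ((n:ℝ)+1) * (Real.exp 1 * (n:ℝ)^(n+1)) / Real.exp 1 ^ n := by
              rw [div_pow]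
              field_simp
              ring
            rw [heq]
            push_cast
            rw [div_pow, ← mul_div_assoc, div_le_div_iff₀ (by positivity) (by positivity)]
            calc ((n:ℝ)+1) * (Real.exp 1 * (n:ℝ)^(n+1)) * Real.exp 1 ^ (n+1)
                = (Real.exp 1 * (n:ℝ)^(n+1)) * (((n:ℝ)+1) * Real.exp 1 ^ (n+1)) := by ring
            _ ≤ (((n:ℝ)+1)^(n+1)) * (((n:ℝ)+1) * Real.exp 1 ^ (n+1)) := by gcongr
            _ = Real.exp 1 * ((n:ℝ)+1) * ((n:ℝ)+1)^(n+1) * Real.exp 1 ^ n := by ring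

open Finset

lemma aux_log_sum (n : ℕ) (hn : 1 ≤ n) :
    ∑ j ∈ range n, Real.log ((n:ℝ)/((j:ℝ)+1)) ≤ (n:ℝ) := by
  have hn0 : (0:ℝ) < n := by exact_mod_cast hn
  have hprod : ∏ j ∈ range n, ((j:ℝ)+1) = (n.factorial : ℝ) := by
    rw [← Finset.prod_range_add_one_eq_factorial]
    push_cast
    rfl
  have h1 : ∑ j ∈ range n, Real.log ((n:ℝ)/((j:ℝ)+1))
      = n * Real.log n - Real.log (n.factorial : ℝ) := by
    calc ∑ j ∈ range n, Real.log ((n:ℝ)/((j:ℝ)+1))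
        = ∑ j ∈ range n, (Real.log (n:ℝ) - Real.log ((j:ℝ)+1)) := by
          refine Finset.sum_congr rfl fun j _ => ?_
          exact Real.log_div hn0.ne' (by positivity)
    _ = n * Real.log n - ∑ j ∈ range n, Real.log ((j:ℝ)+1) := by
          rw [Finset.sum_sub_distrib, Finset.sum_const, card_range, nsmul_eq_mul]
    _ = n * Real.log n - Real.log (n.factorial : ℝ) := by
          rw [← Real.log_prod (s := range n) (f := fun j => (j:ℝ)+1) (fun j _ => by positivity), hprod]
  rw [h1]
  have h2 := aux_pow_le_factorial_mul_exp n
  have h3 : Real.log ((n:ℝ)^n) ≤ Real.log ((n.factorial : ℝ) * Real.exp n) :=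
    Real.log_le_log (by positivity) h2
  rw [Real.log_pow, Real.log_mul (by positivity) (Real.exp_pos _).ne', Real.log_exp] at h3
  linarith [h3]

def innSet (ε B : ℝ) (σ2 : ℕ → ℝ) : Set ℝ :=
  { s | ∃ μ2, BFeasible ε B σ2 μ2 ∧ Summable μ2 ∧ s = ∑' j : ℕ, μ2 j }

lemma innSet_nonneg {ε B : ℝ} {σ2 : ℕ → ℝ} {s : ℝ} (hs : s ∈ innSet ε B σ2) : 0 ≤ s := by
  obtain ⟨μ2, hf, _, rfl⟩ := hs
  exact tsum_nonneg fun j => (hf.1 j).le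

lemma innSet_bddBelow (ε B : ℝ) (σ2 : ℕ → ℝ) : BddBelow (innSet ε B σ2) :=
  ⟨0, fun _ hs => innSet_nonneg hs⟩

/-- Upper bound: for `1 ≤ n` and `m * n ≤ B`,
`sInf (innSet ε B σ2) ≤ (c²/π^{2m}) / n^{2m}`. -/
lemma aux_upper {m c ε B : ℝ} (hm : 0 < m) (hε : 0 < ε) {σ2 : ℕ → ℝ}
    (hσ : Admissible m c σ2) {n : ℕ} (hn : 1 ≤ n) (hB : m * n ≤ B) :
    sInf (innSet ε B σ2) ≤ (c ^ 2 / Real.pi ^ (2 * m)) / (n:ℝ) ^ (2 * m) := by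
  obtain ⟨h0, hsum, hle⟩ := hσ
  have hn0 : (0:ℝ) < n := by exact_mod_cast hn
  have h2m : (0:ℝ) ≤ 2 * m := by linarith
  have hnp : (0:ℝ) < (n:ℝ) ^ (2*m) := Real.rpow_pos_of_pos hn0 _
  refine le_of_forall_pos_le_add fun δ hδ => ?_
  -- the witness
  set g : ℕ → ℝ := fun j => (σ2 j)^2 / (σ2 j + ε^2) with hg
  set rf : ℕ → ℝ := fun j => min ((((j:ℝ)+1)/n) ^ (2*m)) 1 with hrf
  set μ2 : ℕ → ℝ := fun j => g j * rf j + δ/2 * (1/2)^j with hμ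
  have hden : ∀ j, 0 < σ2 j + ε^2 := fun j => by have := h0 j; positivity
  have hg0 : ∀ j, 0 ≤ g j := fun j => div_nonneg (sq_nonneg _) (hden j).le
  have hrfpos : ∀ j, 0 < rf j := fun j =>
    lt_min (Real.rpow_pos_of_pos (by positivity) _) one_pos
  have hrle : ∀ j, rf j ≤ (((j:ℝ)+1)/n) ^ (2*m) := fun j => min_le_left _ _
  have hμpos : ∀ j, 0 < μ2 j := fun j => by
    have := hg0 j; have := (hrfpos j).le
    have : (0:ℝ) < δ/2 * (1/2)^j := by positivity
    simp only [hμ]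
    nlinarith [mul_nonneg (hg0 j) (hrfpos j).le]
  have hgσ : ∀ j, g j ≤ σ2 j := fun j => by
    rw [hg, div_le_iff₀ (hden j)]
    nlinarith [h0 j, sq_nonneg ε, hε]
  -- pointwise upper bound for μ2
  have hμle : ∀ j, μ2 j ≤ (((j:ℝ)+1) ^ (2*m) * σ2 j) / (n:ℝ)^(2*m) + δ/2 * (1/2)^j := by
    intro j
    have h1 : g j * rf j ≤ σ2 j * ((((j:ℝ)+1)/n) ^ (2*m)) :=
      mul_le_mul (hgσ j) (hrle j) (hrfpos j).le (h0 j)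
    have h2 : σ2 j * ((((j:ℝ)+1)/n) ^ (2*m)) = (((j:ℝ)+1) ^ (2*m) * σ2 j) / (n:ℝ)^(2*m) := by
      rw [Real.div_rpow (by positivity) hn0.le]
      ring
    simp only [hμ]
    rw [← h2]
    exact add_le_add_left h1 _
  -- summability of μ2
  have hbnd : Summable (fun j : ℕ => (((j:ℝ)+1) ^ (2*m) * σ2 j) / (n:ℝ)^(2*m) + δ/2 * (1/2)^j) :=
    (hsum.div_const _).add (summable_geometric_two.mul_left _)
  have hμsum : Summable μ2 :=
    Summable.of_nonneg_of_le (fun j => (hμpos j).le) hμle hbnd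
  -- tsum bound
  have htsum : ∑' j, μ2 j ≤ (c ^ 2 / Real.pi ^ (2 * m)) / (n:ℝ)^(2*m) + δ := by
    have h1 : ∑' j, μ2 j ≤ ∑' j : ℕ, ((((j:ℝ)+1) ^ (2*m) * σ2 j) / (n:ℝ)^(2*m) + δ/2 * (1/2)^j) :=
      Summable.tsum_le_tsum hμle hμsum hbnd
    have h2 : ∑' j : ℕ, ((((j:ℝ)+1) ^ (2*m) * σ2 j) / (n:ℝ)^(2*m) + δ/2 * (1/2)^j)
        = (∑' j : ℕ, ((j:ℝ)+1) ^ (2*m) * σ2 j) / (n:ℝ)^(2*m) + δ/2 * ∑' j : ℕ, ((1:ℝ)/2)^j := by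
      rw [Summable.tsum_add (hsum.div_const _) (summable_geometric_two.mul_left _),
        tsum_div_const, tsum_mul_left]
    rw [h2, tsum_geometric_two] at h1
    calc ∑' j, μ2 j ≤ (∑' j : ℕ, ((j:ℝ)+1) ^ (2*m) * σ2 j) / (n:ℝ)^(2*m) + δ/2 * 2 := h1
    _ ≤ (c ^ 2 / Real.pi ^ (2 * m)) / (n:ℝ)^(2*m) + δ := by
        have hδ2 : δ/2*2 = δ := by ring
        rw [hδ2]
        gcongr
  -- feasibility
  have hfeas : BFeasible ε B σ2 μ2 := by
    set t : ℕ → ℝ := fun j : ℕ =>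
      (1 / 2) * max (Real.log ((σ2 j) ^ 2 / (μ2 j * (σ2 j + ε ^ 2)))) 0 with ht
    set u : ℕ → ℝ := fun j : ℕ =>
      if j < n then m * Real.log ((n:ℝ)/((j:ℝ)+1)) else 0 with hu
    have ht0 : ∀ j, 0 ≤ t j := fun j => mul_nonneg (by norm_num) (le_max_right _ _)
    have htu : ∀ j, t j ≤ u j := by
      intro j
      by_cases hj : j < n
      · simp only [hu, if_pos hj]
        have hjn : ((j:ℝ)+1) ≤ (n:ℝ) := by exact_mod_cast hj
        have hb1 : (1:ℝ) ≤ (n:ℝ)/((j:ℝ)+1) := (one_le_div (by positivity)).2 hjn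
        have hRpos : 0 ≤ Real.log ((n:ℝ)/((j:ℝ)+1)) := Real.log_nonneg hb1
        have hinv : (((j:ℝ)+1)/n) ^ (2*m) * ((n:ℝ)/((j:ℝ)+1)) ^ (2*m) = 1 := by
          rw [← Real.mul_rpow (by positivity) (by positivity),
            show (((j:ℝ)+1)/n) * ((n:ℝ)/((j:ℝ)+1)) = 1 by field_simp]
          exact Real.one_rpow _
        have hratio : (σ2 j)^2 / (μ2 j * (σ2 j + ε^2)) ≤ ((n:ℝ)/((j:ℝ)+1)) ^ (2*m) := by
          rcases (h0 j).eq_or_lt with ha | ha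
          · rw [← ha]
            simpa using (Real.rpow_pos_of_pos (by positivity : (0:ℝ) < (n:ℝ)/((j:ℝ)+1)) (2*m)).le
          · have hrf_eq : rf j = (((j:ℝ)+1)/n) ^ (2*m) :=
              min_eq_left (Real.rpow_le_one (by positivity)
                ((div_le_one hn0).2 hjn) h2m)
            have hμ2ge : g j * rf j ≤ μ2 j := by
              simp only [hμ]
              have : (0:ℝ) ≤ δ/2 * (1/2)^j := by positivity
              linarith
            have hgmul : g j * (σ2 j + ε^2) = σ2 j^2 := div_mul_cancel₀ _ (hden j).ne'
            have hd2 : σ2 j^2 * rf j ≤ μ2 j * (σ2 j + ε^2) := by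
              calc σ2 j^2 * rf j = g j * rf j * (σ2 j + ε^2) := by
                    rw [← hgmul]; ring
              _ ≤ μ2 j * (σ2 j + ε^2) := mul_le_mul_of_nonneg_right hμ2ge (hden j).le
            have hd2pos : 0 < σ2 j^2 * rf j := mul_pos (by positivity) (hrfpos j)
            have hr1 : (σ2 j)^2/(μ2 j*(σ2 j + ε^2)) ≤ (σ2 j)^2/(σ2 j^2*rf j) :=
              div_le_div_of_nonneg_left (sq_nonneg _) hd2pos hd2
            have hr2 : (σ2 j)^2/(σ2 j^2*rf j) = ((n:ℝ)/((j:ℝ)+1)) ^ (2*m) := by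
              rw [hrf_eq]
              rw [eq_comm, eq_div_iff (by positivity : (σ2 j^2 * ((((j:ℝ)+1)/n) ^ (2*m))) ≠ 0)]
              calc ((n:ℝ)/((j:ℝ)+1)) ^ (2*m) * (σ2 j^2 * (((j:ℝ)+1)/n) ^ (2*m))
                  = σ2 j^2 * ((((j:ℝ)+1)/n) ^ (2*m) * ((n:ℝ)/((j:ℝ)+1)) ^ (2*m)) := by ring
              _ = (σ2 j)^2 := by rw [hinv]; ring
            exact hr1.trans_eq hr2
        have hlog : Real.log ((σ2 j)^2 / (μ2 j * (σ2 j + ε^2)))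
            ≤ 2*m*Real.log ((n:ℝ)/((j:ℝ)+1)) := by
          have hrnn : (0:ℝ) ≤ (σ2 j)^2 / (μ2 j * (σ2 j + ε^2)) := by
            have := hμpos j; have := hden j; positivity
          rcases hrnn.eq_or_lt with hz | hz
          · rw [← hz, Real.log_zero]
            have := hRpos; nlinarith
          · have := Real.log_le_log hz hratio
            rwa [Real.log_rpow (by positivity)] at this
        have hmax : max (Real.log ((σ2 j)^2 / (μ2 j * (σ2 j + ε^2)))) 0
            ≤ 2*m*Real.log ((n:ℝ)/((j:ℝ)+1)) := max_le hlog (mul_nonneg (by linarith) hRpos)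
        have htj : t j = (1/2) * max (Real.log ((σ2 j)^2 / (μ2 j * (σ2 j + ε^2)))) 0 := rfl
        rw [htj]
        linarith
      · simp only [hu, if_neg hj]
        have hjn : (n:ℝ) ≤ (j:ℝ)+1 := by
          have : n ≤ j := Nat.le_of_not_lt hj
          have : (n:ℝ) ≤ (j:ℝ) := by exact_mod_cast this
          linarith
        have hrf1 : rf j = 1 :=
          min_eq_right (Real.one_le_rpow ((one_le_div hn0).2 hjn) h2m)
        have hgmul : g j * (σ2 j + ε^2) = σ2 j^2 := div_mul_cancel₀ _ (hden j).ne'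
        have hge : g j ≤ μ2 j := by
          simp only [hμ, hrf1]
          have : (0:ℝ) ≤ δ/2 * (1/2)^j := by positivity
          linarith
        have hratio1 : (σ2 j)^2/(μ2 j*(σ2 j + ε^2)) ≤ 1 := by
          rw [div_le_one (mul_pos (hμpos j) (hden j))]
          calc (σ2 j)^2 = g j * (σ2 j + ε^2) := hgmul.symm
          _ ≤ μ2 j * (σ2 j + ε^2) := mul_le_mul_of_nonneg_right hge (hden j).le
        have hlognp : Real.log ((σ2 j)^2/(μ2 j*(σ2 j + ε^2))) ≤ 0 :=
          Real.log_nonpos (by have := hμpos j; have := hden j; positivity) hratio1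
        have hmax : max (Real.log ((σ2 j)^2 / (μ2 j * (σ2 j + ε^2)))) 0 ≤ 0 :=
          max_le hlognp le_rfl
        have htj : t j = (1/2) * max (Real.log ((σ2 j)^2 / (μ2 j * (σ2 j + ε^2)))) 0 := rfl
        rw [htj]
        linarith
    have husum : Summable u :=
      summable_of_ne_finset_zero (s := range n) fun j hj => if_neg (by simpa using hj)
    have hts : Summable t := Summable.of_nonneg_of_le ht0 htu husum
    refine ⟨hμpos, hts, ?_⟩
    have h1 : ∑' j, t j ≤ ∑' j, u j := Summable.tsum_le_tsum htu hts husum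
    have h2 : ∑' j, u j = ∑ j ∈ range n, m * Real.log ((n:ℝ)/((j:ℝ)+1)) := by
      rw [tsum_eq_sum (s := range n) fun j hj => if_neg (by simpa using hj)]
      exact Finset.sum_congr rfl fun j hj => if_pos (by simpa using hj)
    have h3 : ∑ j ∈ range n, m * Real.log ((n:ℝ)/((j:ℝ)+1)) ≤ m * n := by
      rw [← Finset.mul_sum]
      exact mul_le_mul_of_nonneg_left (aux_log_sum n hn) hm.le
    calc ∑' j, t j ≤ ∑' j, u j := h1
    _ ≤ m * n := by rw [h2]; exact h3
    _ ≤ B := hB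
  have hmem : ∑' j, μ2 j ∈ innSet ε B σ2 := ⟨μ2, hfeas, hμsum, rfl⟩
  exact (csInf_le (innSet_bddBelow ε B σ2) hmem).trans htsum

/-- AM-GM lower bound for any element of the inner set. -/
lemma aux_amgm {ε B : ℝ} (hε : 0 < ε) {σ2 : ℕ → ℝ}
    {n : ℕ} (hn : 1 ≤ n) (hpos : ∀ j, j < n → 0 < σ2 j) {s : ℝ}
    (hs : s ∈ innSet ε B σ2) :
    (n:ℝ) * (∏ j ∈ range n, (σ2 j)^2/(σ2 j + ε^2)) ^ (1/(n:ℝ)) * Real.exp (-2*B/(n:ℝ)) ≤ s := by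
  obtain ⟨μ2, ⟨hμpos, hts, htB⟩, hμsum, rfl⟩ := hs
  have hn0 : (0:ℝ) < n := by exact_mod_cast hn
  set g : ℕ → ℝ := fun j => (σ2 j)^2/(σ2 j + ε^2) with hg
  set t : ℕ → ℝ := fun j : ℕ =>
    (1 / 2) * max (Real.log ((σ2 j) ^ 2 / (μ2 j * (σ2 j + ε ^ 2)))) 0 with ht
  have ht0 : ∀ j, 0 ≤ t j := fun j => mul_nonneg (by norm_num) (le_max_right _ _)
  have hTB : ∑ j ∈ range n, t j ≤ B :=
    (Summable.sum_le_tsum (range n) (fun j _ => ht0 j) hts).trans htB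
  -- key pointwise bound
  have hkey : ∀ j, j < n → g j * Real.exp (-(2 * t j)) ≤ μ2 j := by
    intro j hj
    have hσ : 0 < σ2 j := hpos j hj
    have hdj : 0 < σ2 j + ε^2 := by positivity
    have hgj : 0 < g j := by rw [hg]; positivity
    have hρ : (σ2 j) ^ 2 / (μ2 j * (σ2 j + ε ^ 2)) = g j / μ2 j := by
      rw [hg, div_div, mul_comm]
    by_cases hρ1 : (σ2 j) ^ 2 / (μ2 j * (σ2 j + ε ^ 2)) ≤ 1
    · have h1 : g j ≤ μ2 j := by
        rw [hρ, div_le_one (hμpos j)] at hρ1; exact hρ1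
      have h2 : Real.exp (-(2 * t j)) ≤ 1 := by
        rw [Real.exp_le_one_iff]
        have := ht0 j; linarith
      calc g j * Real.exp (-(2 * t j)) ≤ g j * 1 :=
            mul_le_mul_of_nonneg_left h2 hgj.le
      _ = g j := mul_one _
      _ ≤ μ2 j := h1
    · push_neg at hρ1
      have hρpos : 0 < (σ2 j) ^ 2 / (μ2 j * (σ2 j + ε ^ 2)) := by linarith
      have hlogpos : 0 < Real.log ((σ2 j) ^ 2 / (μ2 j * (σ2 j + ε ^ 2))) :=
        Real.log_pos hρ1
      have htj : t j = (1/2) * Real.log ((σ2 j) ^ 2 / (μ2 j * (σ2 j + ε ^ 2))) := by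
        have : max (Real.log ((σ2 j) ^ 2 / (μ2 j * (σ2 j + ε ^ 2)))) 0
            = Real.log ((σ2 j) ^ 2 / (μ2 j * (σ2 j + ε ^ 2))) := max_eq_left hlogpos.le
        rw [ht]
        simpa [this]
      have hexp : Real.exp (-(2 * t j)) = ((σ2 j) ^ 2 / (μ2 j * (σ2 j + ε ^ 2)))⁻¹ := by
        rw [htj]
        rw [show -(2 * ((1/2) * Real.log ((σ2 j) ^ 2 / (μ2 j * (σ2 j + ε ^ 2)))))
            = -Real.log ((σ2 j) ^ 2 / (μ2 j * (σ2 j + ε ^ 2))) by ring]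
        rw [Real.exp_neg, Real.exp_log hρpos]
      rw [hexp, hρ]
      rw [show g j * (g j / μ2 j)⁻¹ = μ2 j * (g j / g j) * (μ2 j / μ2 j) by
        field_simp]
      rw [div_self hgj.ne', div_self (hμpos j).ne']
      simp
  -- AM-GM
  have hAM := Real.geom_mean_le_arith_mean_weighted (range n) (fun _ => 1/(n:ℝ)) μ2
    (fun i _ => by positivity)
    (by rw [Finset.sum_const, card_range, nsmul_eq_mul]; field_simp)
    (fun i _ => (hμpos i).le)
  -- chain
  have hgnn : ∀ j, j ∈ range n → (0:ℝ) ≤ g j := fun j hj => by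
    have := hpos j (mem_range.1 hj); rw [hg]; positivity
  have hg0 : (0:ℝ) ≤ ∏ j ∈ range n, g j := Finset.prod_nonneg hgnn
  have h1 : ∀ j ∈ range n,
      (g j * Real.exp (-(2*t j)))^(1/(n:ℝ)) ≤ (μ2 j)^(1/(n:ℝ)) := fun j hj =>
    Real.rpow_le_rpow (mul_nonneg (hgnn j hj) (Real.exp_pos _).le)
      (hkey j (mem_range.1 hj)) (by positivity)
  have h2 : ∏ j ∈ range n, (g j * Real.exp (-(2*t j)))^(1/(n:ℝ))
      ≤ ∏ j ∈ range n, (μ2 j)^(1/(n:ℝ)) :=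
    Finset.prod_le_prod (fun j hj => Real.rpow_nonneg
      (mul_nonneg (hgnn j hj) (Real.exp_pos _).le) _) h1
  have h3 : ∏ j ∈ range n, (g j * Real.exp (-(2*t j)))^(1/(n:ℝ))
      = (∏ j ∈ range n, g j) ^ (1/(n:ℝ))
        * Real.exp (-2*(∑ j ∈ range n, t j)/(n:ℝ)) := by
    calc ∏ j ∈ range n, (g j * Real.exp (-(2*t j)))^(1/(n:ℝ))
        = ∏ j ∈ range n, ((g j)^(1/(n:ℝ)) * Real.exp (-(2*t j))^(1/(n:ℝ))) :=
          Finset.prod_congr rfl fun j hj =>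
            Real.mul_rpow (hgnn j hj) (Real.exp_pos _).le
    _ = (∏ j ∈ range n, (g j)^(1/(n:ℝ)))
          * ∏ j ∈ range n, Real.exp (-(2*t j))^(1/(n:ℝ)) := Finset.prod_mul_distrib
    _ = (∏ j ∈ range n, g j) ^ (1/(n:ℝ))
          * Real.exp (-2*(∑ j ∈ range n, t j)/(n:ℝ)) := by
        congr 1
        · exact (Real.finset_prod_rpow (range n) g hgnn _)
        · calc ∏ j ∈ range n, Real.exp (-(2*t j))^(1/(n:ℝ))
              = ∏ j ∈ range n, Real.exp (-(2*t j) * (1/(n:ℝ))) :=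
                Finset.prod_congr rfl fun j _ => (Real.exp_mul _ _).symm
          _ = Real.exp (∑ j ∈ range n, -(2*t j) * (1/(n:ℝ))) := (Real.exp_sum _ _).symm
          _ = Real.exp (-2*(∑ j ∈ range n, t j)/(n:ℝ)) := by
              congr 1
              rw [← Finset.sum_mul]
              rw [show ∑ j ∈ range n, -(2*t j) = -2 * ∑ j ∈ range n, t j by
                rw [Finset.mul_sum]; exact Finset.sum_congr rfl fun j _ => by ring]
              ring
  have hprod1 : (∏ j ∈ range n, g j) ^ (1/(n:ℝ)) * Real.exp (-2*B/(n:ℝ))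
      ≤ ∏ j ∈ range n, (μ2 j) ^ (1/(n:ℝ)) := by
    have hstep1 : (∏ j ∈ range n, g j) ^ (1/(n:ℝ)) * Real.exp (-2*B/(n:ℝ))
        ≤ (∏ j ∈ range n, g j) ^ (1/(n:ℝ))
          * Real.exp (-2*(∑ j ∈ range n, t j)/(n:ℝ)) := by
      refine mul_le_mul_of_nonneg_left ?_ (Real.rpow_nonneg hg0 _)
      apply Real.exp_le_exp.2
      rw [div_le_div_iff₀ hn0 hn0]
      nlinarith [hTB]
    exact hstep1.trans (h3 ▸ h2)
  -- put it together
  have hsum_le : ∑ j ∈ range n, μ2 j ≤ ∑' j, μ2 j :=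
    Summable.sum_le_tsum (range n) (fun j _ => (hμpos j).le) hμsum
  have hAM' : ∏ j ∈ range n, (μ2 j) ^ (1/(n:ℝ))
      ≤ (1/(n:ℝ)) * ∑ j ∈ range n, μ2 j := by
    refine hAM.trans_eq ?_
    rw [Finset.mul_sum]
  calc (n:ℝ) * (∏ j ∈ range n, g j) ^ (1/(n:ℝ)) * Real.exp (-2*B/(n:ℝ))
      = (n:ℝ) * ((∏ j ∈ range n, g j) ^ (1/(n:ℝ)) * Real.exp (-2*B/(n:ℝ))) := by ring
  _ ≤ (n:ℝ) * ((1/(n:ℝ)) * ∑ j ∈ range n, μ2 j) := by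
      refine mul_le_mul_of_nonneg_left (hprod1.trans hAM') hn0.le
  _ = ∑ j ∈ range n, μ2 j := by field_simp
  _ ≤ ∑' j, μ2 j := hsum_le

lemma aux_one_le_rpow_j (m : ℝ) (hm : 0 < m) (j : ℕ) : (1:ℝ) ≤ ((j:ℝ)+1) ^ (2*m) :=
  Real.one_le_rpow (by exact_mod_cast Nat.succ_le_succ (Nat.zero_le j)) (by linarith)

lemma aux_summable_sigma {m c : ℝ} (hm : 0 < m) {σ2 : ℕ → ℝ}
    (hσ : Admissible m c σ2) : Summable σ2 := by
  obtain ⟨h0, hsum, _⟩ := hσ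
  refine Summable.of_nonneg_of_le h0 (fun j => ?_) hsum
  calc σ2 j = 1 * σ2 j := (one_mul _).symm
  _ ≤ ((j:ℝ)+1) ^ (2*m) * σ2 j :=
      mul_le_mul_of_nonneg_right (aux_one_le_rpow_j m hm j) (h0 j)

lemma aux_innSet_nonempty {m c ε B : ℝ} (hm : 0 < m) (hε : 0 < ε) (hB : 0 ≤ B)
    {σ2 : ℕ → ℝ} (hσ : Admissible m c σ2) : (innSet ε B σ2).Nonempty := by
  obtain ⟨h0, hsum, hle⟩ := hσ
  set μ2 : ℕ → ℝ := fun j => σ2 j + ε^2 * (1/2)^j with hμ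
  have hμpos : ∀ j, 0 < μ2 j := fun j => by
    have := h0 j; simp only [hμ]; positivity
  have hμsum : Summable μ2 :=
    (aux_summable_sigma hm ⟨h0, hsum, hle⟩).add (summable_geometric_two.mul_left _)
  have hden : ∀ j, 0 < σ2 j + ε^2 := fun j => by have := h0 j; positivity
  have ht : ∀ j, (1 / 2) * max (Real.log ((σ2 j) ^ 2 / (μ2 j * (σ2 j + ε ^ 2)))) 0 = 0 := by
    intro j
    have hratio : (σ2 j) ^ 2 / (μ2 j * (σ2 j + ε ^ 2)) ≤ 1 := by
      rw [div_le_one (mul_pos (hμpos j) (hden j))]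
      have h1 : σ2 j ≤ μ2 j := by
        simp only [hμ]
        have : (0:ℝ) ≤ ε^2 * (1/2)^j := by positivity
        linarith
      calc (σ2 j)^2 = σ2 j * σ2 j := sq (σ2 j) ▸ by ring
      _ ≤ μ2 j * (σ2 j + ε^2) := by
          have := h0 j
          have : σ2 j * σ2 j ≤ μ2 j * σ2 j := mul_le_mul_of_nonneg_right h1 this
          nlinarith [hμpos j, sq_nonneg ε, hε]
    have hlog : Real.log ((σ2 j) ^ 2 / (μ2 j * (σ2 j + ε ^ 2))) ≤ 0 :=
      Real.log_nonpos (by have := hμpos j; have := hden j; positivity) hratio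
    rw [max_eq_right hlog]
    ring
  have hfun : (fun j : ℕ => (1 / 2) * max (Real.log ((σ2 j) ^ 2 / (μ2 j * (σ2 j + ε ^ 2)))) 0)
      = fun _ => (0:ℝ) := funext ht
  refine ⟨∑' j, μ2 j, μ2, ⟨hμpos, ?_, ?_⟩, hμsum, rfl⟩
  · rw [hfun]; exact summable_zero
  · rw [hfun]; simpa using hB

lemma aux_bddAbove {m c ε B : ℝ} (hm : 0 < m) (hε : 0 < ε) (hB : m ≤ B) :
    BddAbove { r | ∃ σ2, Admissible m c σ2 ∧ r = sInf (innSet ε B σ2) } := by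
  refine ⟨c ^ 2 / Real.pi ^ (2 * m), fun r hr => ?_⟩
  obtain ⟨σ2, hσ, rfl⟩ := hr
  have h := aux_upper hm hε hσ (n := 1) le_rfl (by simpa using hB)
  simpa [Real.one_rpow] using h

lemma aux_quantVal_eq (m c ε B : ℝ) :
    quantVal m c ε B
      = sSup { r | ∃ σ2, Admissible m c σ2 ∧ r = sInf (innSet ε B σ2) } := rfl

lemma aux_quantVal_le {m c ε B : ℝ} (hm : 0 < m) (hε : 0 < ε) {n : ℕ}
    (hn : 1 ≤ n) (hB : m * n ≤ B) :
    quantVal m c ε B ≤ (c ^ 2 / Real.pi ^ (2 * m)) / (n:ℝ) ^ (2 * m) := by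
  rw [aux_quantVal_eq]
  refine Real.sSup_le (fun r hr => ?_) (by positivity)
  obtain ⟨σ2, hσ, rfl⟩ := hr
  exact aux_upper hm hε hσ hn hB

/-- The near-extremal sequence for the lower bound. -/
noncomputable def lowσ (m c : ℝ) (n : ℕ) : ℕ → ℝ := fun j =>
  if j < n then (c^2/Real.pi^(2*m)) / ((n:ℝ) * ((j:ℝ)+1)^(2*m)) else 0

lemma lowσ_admissible {m c : ℝ} (hm : 0 < m) (hc : 0 < c) {n : ℕ} (hn : 1 ≤ n) :
    Admissible m c (lowσ m c n) := by
  have hn0 : (0:ℝ) < n := by exact_mod_cast hn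
  have hπ : (0:ℝ) < Real.pi ^ (2*m) := Real.rpow_pos_of_pos Real.pi_pos _
  have hfun : (fun j : ℕ => ((j:ℝ)+1) ^ (2*m) * lowσ m c n j)
      = fun j => if j < n then (c^2/Real.pi^(2*m))/(n:ℝ) else 0 := by
    funext j
    by_cases hj : j < n
    · have hjp : (0:ℝ) < ((j:ℝ)+1) ^ (2*m) := Real.rpow_pos_of_pos (by positivity) _
      rw [lowσ, if_pos hj, if_pos hj]
      field_simp
    · rw [lowσ, if_neg hj, if_neg hj, mul_zero]
  refine ⟨fun j => ?_, ?_, ?_⟩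
  · rw [lowσ]
    by_cases hj : j < n
    · rw [if_pos hj]; positivity
    · rw [if_neg hj]
  · rw [hfun]
    exact summable_of_ne_finset_zero (s := Finset.range n)
      fun j hj => if_neg (by simpa using hj)
  · rw [hfun, tsum_eq_sum (s := Finset.range n) (fun j hj => if_neg (by simpa using hj))]
    have : ∑ j ∈ Finset.range n, (if j < n then (c^2/Real.pi^(2*m))/(n:ℝ) else 0)
        = ∑ j ∈ Finset.range n, (c^2/Real.pi^(2*m))/(n:ℝ) :=
      Finset.sum_congr rfl fun j hj => if_pos (by simpa using hj)
    rw [this, Finset.sum_const, card_range, nsmul_eq_mul]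
    rw [mul_div_cancel₀ _ hn0.ne']

lemma aux_quantVal_ge {m c ε B : ℝ} (hm : 0 < m) (hc : 0 < c) (hε : 0 < ε)
    (hB : m ≤ B) {n : ℕ} (hn : 1 ≤ n) :
    (n:ℝ) * (∏ j ∈ range n, (lowσ m c n j)^2/(lowσ m c n j + ε^2)) ^ (1/(n:ℝ))
        * Real.exp (-2*B/(n:ℝ))
      ≤ quantVal m c ε B := by
  have hadm := lowσ_admissible (c := c) hm hc hn
  have hpos : ∀ j, j < n → 0 < lowσ m c n j := by
    intro j hj
    rw [lowσ, if_pos hj]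
    have hπ : (0:ℝ) < Real.pi ^ (2*m) := Real.rpow_pos_of_pos Real.pi_pos _
    have hn0 : (0:ℝ) < n := by exact_mod_cast hn
    have : (0:ℝ) < ((j:ℝ)+1) ^ (2*m) := Real.rpow_pos_of_pos (by positivity) _
    positivity
  have hne : (innSet ε B (lowσ m c n)).Nonempty :=
    aux_innSet_nonempty hm hε (hm.le.trans hB) hadm
  have h1 : (n:ℝ) * (∏ j ∈ range n, (lowσ m c n j)^2/(lowσ m c n j + ε^2)) ^ (1/(n:ℝ))
      * Real.exp (-2*B/(n:ℝ)) ≤ sInf (innSet ε B (lowσ m c n)) :=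
    le_csInf hne fun s hs => aux_amgm hε hn hpos hs
  refine h1.trans ?_
  rw [aux_quantVal_eq]
  exact le_csSup (aux_bddAbove hm hε hB) ⟨lowσ m c n, hadm, rfl⟩

lemma aux_prod_cast (n : ℕ) : ∏ j ∈ range n, ((j:ℝ)+1) = (n.factorial : ℝ) := by
  rw [← Finset.prod_range_add_one_eq_factorial]
  push_cast
  rfl

lemma aux_prod_bound {m c ε : ℝ} (hm : 0 < m) (hc : 0 < c) (hε : 0 < ε)
    {n : ℕ} (hn : 1 ≤ n) :
    (c^2/Real.pi^(2*m))/(n:ℝ) * (Real.exp 1/(n:ℝ))^(2*m)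
        * (Real.exp 1*(n:ℝ))^(-(2*m/(n:ℝ)))
        / (1 + ε^2*(n:ℝ)*(n:ℝ)^(2*m)/(c^2/Real.pi^(2*m)))
      ≤ (∏ j ∈ range n, (lowσ m c n j)^2/(lowσ m c n j + ε^2)) ^ (1/(n:ℝ)) := by
  have hπ : (0:ℝ) < Real.pi ^ (2*m) := Real.rpow_pos_of_pos Real.pi_pos _
  set C : ℝ := c^2/Real.pi^(2*m) with hCdef
  have hC : 0 < C := by positivity
  have hn0 : (0:ℝ) < n := by exact_mod_cast hn
  have h2m : (0:ℝ) ≤ 2*m := by linarith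
  have hnr : (0:ℝ) < (n:ℝ)^(2*m) := Real.rpow_pos_of_pos hn0 _
  have hK : (0:ℝ) < (n:ℝ)*(n:ℝ)^(2*m) := by positivity
  set D : ℝ := 1 + ε^2*(n:ℝ)*(n:ℝ)^(2*m)/C with hDdef
  have hD : (1:ℝ) ≤ D := by
    rw [hDdef]
    have : (0:ℝ) ≤ ε^2*(n:ℝ)*(n:ℝ)^(2*m)/C := by positivity
    linarith
  have hD0 : (0:ℝ) < D := by linarith
  have he : (0:ℝ) < Real.exp 1 := Real.exp_pos 1
  -- values and positivity of lowσ on range n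
  have hval : ∀ j ∈ range n, lowσ m c n j = C/((n:ℝ)*(((j:ℝ)+1)^(2*m))) := by
    intro j hj
    rw [lowσ, if_pos (mem_range.1 hj)]
  have hposσ : ∀ j ∈ range n, 0 < lowσ m c n j := by
    intro j hj
    rw [hval j hj]
    have : (0:ℝ) < ((j:ℝ)+1)^(2*m) := Real.rpow_pos_of_pos (by positivity) _
    positivity
  have hlb : ∀ j ∈ range n, C/((n:ℝ)*(n:ℝ)^(2*m)) ≤ lowσ m c n j := by
    intro j hj
    rw [hval j hj]
    have hj1 : ((j:ℝ)+1) ≤ (n:ℝ) := by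
      have := mem_range.1 hj; exact_mod_cast this
    have hjp : (0:ℝ) < ((j:ℝ)+1)^(2*m) := Real.rpow_pos_of_pos (by positivity) _
    have hle : ((j:ℝ)+1)^(2*m) ≤ (n:ℝ)^(2*m) :=
      Real.rpow_le_rpow (by positivity) hj1 h2m
    gcongr
  -- per-factor bound
  have hfac : ∀ j ∈ range n, lowσ m c n j / D
      ≤ (lowσ m c n j)^2/(lowσ m c n j + ε^2) := by
    intro j hj
    set a : ℝ := lowσ m c n j with ha
    have ha0 : 0 < a := hposσ j hj
    have haε : 0 < a + ε^2 := by positivity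
    have hCa : C ≤ a * ((n:ℝ)*(n:ℝ)^(2*m)) := by
      have := hlb j hj
      rw [div_le_iff₀ hK] at this
      linarith
    have hua : ε^2 ≤ (ε^2*(n:ℝ)*(n:ℝ)^(2*m)/C) * a := by
      rw [div_mul_eq_mul_div, le_div_iff₀ hC]
      have h2 : (0:ℝ) ≤ ε^2 := sq_nonneg ε
      calc ε^2 * C ≤ ε^2 * (a * ((n:ℝ)*(n:ℝ)^(2*m))) := by gcongr
      _ = ε^2*(n:ℝ)*(n:ℝ)^(2*m)*a := by ring
    rw [div_le_div_iff₀ hD0 haε]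
    have hexp : a^2 * D = a^2 + a * ((ε^2*(n:ℝ)*(n:ℝ)^(2*m)/C) * a) := by
      rw [hDdef]; ring
    rw [hexp]
    have : a * ε^2 ≤ a * ((ε^2*(n:ℝ)*(n:ℝ)^(2*m)/C) * a) :=
      mul_le_mul_of_nonneg_left hua ha0.le
    nlinarith
  -- product bound
  have hprodD : (∏ j ∈ range n, lowσ m c n j) / D^n
      ≤ ∏ j ∈ range n, (lowσ m c n j)^2/(lowσ m c n j + ε^2) := by
    have h1 : ∏ j ∈ range n, (lowσ m c n j / D)
        ≤ ∏ j ∈ range n, (lowσ m c n j)^2/(lowσ m c n j + ε^2) :=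
      Finset.prod_le_prod (fun j hj => by
        have := hposσ j hj; positivity) hfac
    calc (∏ j ∈ range n, lowσ m c n j) / D^n
        = ∏ j ∈ range n, (lowσ m c n j / D) := by
          rw [Finset.prod_div_distrib, Finset.prod_const, card_range]
    _ ≤ _ := h1
  -- value of the product of lowσ
  have hprodσ : ∏ j ∈ range n, lowσ m c n j
      = (C/(n:ℝ))^n / ((n.factorial:ℝ))^(2*m) := by
    have h1 : ∀ j ∈ range n, lowσ m c n j = (C/(n:ℝ)) / (((j:ℝ)+1)^(2*m)) := by
      intro j hj
      rw [hval j hj, ← div_div]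
    rw [Finset.prod_congr rfl h1, Finset.prod_div_distrib, Finset.prod_const, card_range]
    congr 1
    rw [Real.finset_prod_rpow (range n) _ (fun j _ => by positivity) (2*m)]
    rw [aux_prod_cast]
  -- take n-th roots
  have hgnn : ∀ j ∈ range n, (0:ℝ) ≤ (lowσ m c n j)^2/(lowσ m c n j + ε^2) := by
    intro j hj
    have := hposσ j hj; positivity
  have hσnn : (0:ℝ) ≤ ∏ j ∈ range n, lowσ m c n j :=
    Finset.prod_nonneg fun j hj => (hposσ j hj).le
  have hmono : ((∏ j ∈ range n, lowσ m c n j) / D^n)^(1/(n:ℝ))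
      ≤ (∏ j ∈ range n, (lowσ m c n j)^2/(lowσ m c n j + ε^2)) ^ (1/(n:ℝ)) :=
    Real.rpow_le_rpow (by positivity) hprodD (by positivity)
  refine le_trans ?_ hmono
  have hfct : (0:ℝ) < (n.factorial:ℝ) := by exact_mod_cast n.factorial_pos
  have hDn : ((D:ℝ)^n)^(1/(n:ℝ)) = D := by
    rw [← Real.rpow_natCast D n, ← Real.rpow_mul hD0.le, mul_one_div,
      div_self hn0.ne', Real.rpow_one]
  have hCn : (((C/(n:ℝ)))^n)^(1/(n:ℝ)) = C/(n:ℝ) := by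
    rw [← Real.rpow_natCast (C/(n:ℝ)) n, ← Real.rpow_mul (by positivity), mul_one_div,
      div_self hn0.ne', Real.rpow_one]
  have hsplit : ((∏ j ∈ range n, lowσ m c n j)/D^n)^(1/(n:ℝ))
      = (C/(n:ℝ)) / ((n.factorial:ℝ))^(2*m/(n:ℝ)) / D := by
    rw [hprodσ, Real.div_rpow (by positivity) (by positivity),
      Real.div_rpow (by positivity) (by positivity), hCn, hDn,
      ← Real.rpow_mul hfct.le, mul_one_div]
  rw [hsplit]
  -- compare numerators
  have hfkey : ((n.factorial:ℝ))^(2*m/(n:ℝ))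
      ≤ ((n:ℝ)/Real.exp 1)^(2*m) * (Real.exp 1*(n:ℝ))^(2*m/(n:ℝ)) := by
    have h1 : ((n.factorial:ℝ))^(2*m/(n:ℝ))
        ≤ (Real.exp 1 * (n:ℝ) * (((n:ℝ)/Real.exp 1)^n))^(2*m/(n:ℝ)) :=
      Real.rpow_le_rpow hfct.le (aux_factorial_le n hn) (by positivity)
    have h2 : (Real.exp 1 * (n:ℝ) * (((n:ℝ)/Real.exp 1)^n))^(2*m/(n:ℝ))
        = (Real.exp 1*(n:ℝ))^(2*m/(n:ℝ)) * ((n:ℝ)/Real.exp 1)^(2*m) := by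
      rw [Real.mul_rpow (by positivity) (by positivity)]
      congr 1
      rw [← Real.rpow_natCast ((n:ℝ)/Real.exp 1) n, ← Real.rpow_mul (by positivity)]
      congr 1
      field_simp
    rw [h2] at h1
    rw [mul_comm (((n:ℝ)/Real.exp 1)^(2*m)) _]
    exact h1
  have hpos1 : (0:ℝ) < ((n:ℝ)/Real.exp 1)^(2*m) := Real.rpow_pos_of_pos (by positivity) _
  have hpos2 : (0:ℝ) < (Real.exp 1*(n:ℝ))^(2*m/(n:ℝ)) := Real.rpow_pos_of_pos (by positivity) _
  have hpos3 : (0:ℝ) < ((n.factorial:ℝ))^(2*m/(n:ℝ)) := Real.rpow_pos_of_pos hfct _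
  have hinv1 : (Real.exp 1/(n:ℝ))^(2*m) = (((n:ℝ)/Real.exp 1)^(2*m))⁻¹ := by
    rw [← Real.inv_rpow (by positivity), inv_div]
  have hinv2 : (Real.exp 1*(n:ℝ))^(-(2*m/(n:ℝ))) = ((Real.exp 1*(n:ℝ))^(2*m/(n:ℝ)))⁻¹ :=
    Real.rpow_neg (by positivity) _
  have hnum : C/(n:ℝ) * (Real.exp 1/(n:ℝ))^(2*m) * (Real.exp 1*(n:ℝ))^(-(2*m/(n:ℝ)))
      ≤ (C/(n:ℝ)) / ((n.factorial:ℝ))^(2*m/(n:ℝ)) := by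
    rw [hinv1, hinv2, mul_assoc, ← mul_inv, div_eq_mul_inv (C/(n:ℝ))]
    refine mul_le_mul_of_nonneg_left ?_ (by positivity)
    exact inv_anti₀ hpos3 hfkey
  gcongr

lemma aux_main_lower {m c ε B : ℝ} (hm : 0 < m) (hc : 0 < c) (hε : 0 < ε)
    (hB : m ≤ B) {n : ℕ} (hn : 1 ≤ n) :
    (c^2/Real.pi^(2*m)) * (Real.exp 1/(n:ℝ))^(2*m)
        * (Real.exp 1*(n:ℝ))^(-(2*m/(n:ℝ))) * Real.exp (-2*B/(n:ℝ))
        / (1 + ε^2*(n:ℝ)*(n:ℝ)^(2*m)/(c^2/Real.pi^(2*m)))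
      ≤ quantVal m c ε B := by
  have hπ : (0:ℝ) < Real.pi ^ (2*m) := Real.rpow_pos_of_pos Real.pi_pos _
  have hC : (0:ℝ) < c^2/Real.pi^(2*m) := by positivity
  have hn0 : (0:ℝ) < n := by exact_mod_cast hn
  have hnr : (0:ℝ) < (n:ℝ)^(2*m) := Real.rpow_pos_of_pos hn0 _
  have hD0 : (0:ℝ) < 1 + ε^2*(n:ℝ)*(n:ℝ)^(2*m)/(c^2/Real.pi^(2*m)) := by positivity
  have h1 := aux_quantVal_ge hm hc hε hB hn
  have h2 := aux_prod_bound (ε := ε) hm hc hε hn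
  refine le_trans ?_ h1
  have hE : (0:ℝ) < Real.exp (-2*B/(n:ℝ)) := Real.exp_pos _
  calc (c^2/Real.pi^(2*m)) * (Real.exp 1/(n:ℝ))^(2*m)
        * (Real.exp 1*(n:ℝ))^(-(2*m/(n:ℝ))) * Real.exp (-2*B/(n:ℝ))
        / (1 + ε^2*(n:ℝ)*(n:ℝ)^(2*m)/(c^2/Real.pi^(2*m)))
      = (n:ℝ) * ((c^2/Real.pi^(2*m))/(n:ℝ) * (Real.exp 1/(n:ℝ))^(2*m)
          * (Real.exp 1*(n:ℝ))^(-(2*m/(n:ℝ)))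
          / (1 + ε^2*(n:ℝ)*(n:ℝ)^(2*m)/(c^2/Real.pi^(2*m))))
          * Real.exp (-2*B/(n:ℝ)) := by
        field_simp
  _ ≤ (n:ℝ) * (∏ j ∈ range n, (lowσ m c n j)^2/(lowσ m c n j + ε^2)) ^ (1/(n:ℝ))
        * Real.exp (-2*B/(n:ℝ)) := by
      refine mul_le_mul_of_nonneg_right (mul_le_mul_of_nonneg_left h2 hn0.le) hE.le

end QuantAux

open Filter Finset in
/-- **Asymptotics of the quantization-error value in the insufficient regime:** if `B_ε → ∞`
and `B_ε ε^{2/(2m+1)} → 0` as `ε → 0`, then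
`lim_{ε→0} B_ε^{2m} Q_ε(m,c,B_ε) = c² m^{2m}/π^{2m}`. -/
theorem quantVal_asymptotics (m c : ℝ) (hm : 0 < m) (hc : 0 < c) (B : ℝ → ℝ)
    (hBtop : Tendsto B (nhdsWithin 0 (Set.Ioi 0)) atTop)
    (hB0 : Tendsto (fun ε : ℝ => B ε * ε ^ (2 / (2 * m + 1))) (nhdsWithin 0 (Set.Ioi 0))
      (nhds 0)) :
    Tendsto (fun ε : ℝ => B ε ^ (2 * m) * quantVal m c ε (B ε))
      (nhdsWithin 0 (Set.Ioi 0)) (nhds (c ^ 2 * m ^ (2 * m) / Real.pi ^ (2 * m))) := by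
  have hπ : (0:ℝ) < Real.pi ^ (2*m) := Real.rpow_pos_of_pos Real.pi_pos _
  set C : ℝ := c^2/Real.pi^(2*m) with hCdef
  have hC : 0 < C := by positivity
  set l : Filter ℝ := nhdsWithin 0 (Set.Ioi 0) with hl
  set N : ℝ → ℕ := fun ε => ⌈B ε / m⌉₊ with hN
  set M : ℝ → ℕ := fun ε => ⌊B ε / m⌋₊ with hM
  have hεpos : ∀ᶠ ε in l, 0 < ε :=
    eventually_mem_nhdsWithin.mono fun x hx => hx
  have hBbig : ∀ᶠ ε in l, 2*m + 1 ≤ B ε := hBtop.eventually_ge_atTop _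
  -- basic consequences
  have hB1 : ∀ ε, 2*m+1 ≤ B ε → 0 < B ε := fun ε h => by linarith
  have hBm1 : ∀ ε, 2*m+1 ≤ B ε → 1 ≤ B ε / m := fun ε h => by
    rw [le_div_iff₀ hm]; linarith
  have hN1 : ∀ ε, 2*m+1 ≤ B ε → 1 ≤ N ε := fun ε h =>
    Nat.one_le_ceil_iff.2 (by have := hBm1 ε h; linarith)
  have hM1 : ∀ ε, 2*m+1 ≤ B ε → 1 ≤ M ε := fun ε h =>
    Nat.le_floor (by exact_mod_cast hBm1 ε h)
  have hNpos : ∀ ε, 2*m+1 ≤ B ε → (0:ℝ) < (N ε : ℝ) := fun ε h => by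
    exact_mod_cast hN1 ε h
  have hMpos : ∀ ε, 2*m+1 ≤ B ε → (0:ℝ) < (M ε : ℝ) := fun ε h => by
    exact_mod_cast hM1 ε h
  have hNge : ∀ ε, B ε / m ≤ (N ε : ℝ) := fun ε => Nat.le_ceil _
  have hNle : ∀ ε, 2*m+1 ≤ B ε → (N ε : ℝ) ≤ B ε/m + 1 := fun ε h =>
    (Nat.ceil_lt_add_one (by have := hBm1 ε h; linarith)).le
  have hMle : ∀ ε, 2*m+1 ≤ B ε → (M ε : ℝ) ≤ B ε / m := fun ε h =>
    Nat.floor_le (by have := hBm1 ε h; linarith)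
  have hMge : ∀ ε, B ε/m - 1 < (M ε : ℝ) := fun ε => Nat.sub_one_lt_floor _
  -- N → ∞
  have hBdiv : Tendsto (fun ε => B ε / m) l atTop := hBtop.atTop_div_const hm
  have hNtop : Tendsto (fun ε => (N ε : ℝ)) l atTop :=
    tendsto_atTop_mono (fun ε => hNge ε) hBdiv
  -- B/N → m
  have hBNm : Tendsto (fun ε => B ε / (N ε : ℝ)) l (nhds m) := by
    have hup : ∀ᶠ ε in l, B ε / (N ε : ℝ) ≤ m := by
      filter_upwards [hBbig] with ε h
      rw [div_le_iff₀ (hNpos ε h)]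
      have h2 := hNge ε
      calc B ε = m * (B ε / m) := by field_simp
      _ ≤ m * (N ε : ℝ) := by gcongr
    have hlo : ∀ᶠ ε in l, m * B ε / (B ε + m) ≤ B ε / (N ε : ℝ) := by
      filter_upwards [hBbig] with ε h
      have hB' := hB1 ε h
      have h1 : (0:ℝ) < B ε + m := by linarith
      rw [div_le_div_iff₀ h1 (hNpos ε h)]
      have h2 := hNle ε h
      calc m * B ε * (N ε : ℝ) ≤ m * B ε * (B ε/m + 1) := by gcongr
      _ = B ε * (B ε + m) := by field_simp
    have hlim : Tendsto (fun ε => m * B ε / (B ε + m)) l (nhds m) := by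
      have h1 : Tendsto (fun x : ℝ => m * x / (x + m)) atTop (nhds m) := by
        have h2 : Tendsto (fun x : ℝ => m - m^2/(x+m)) atTop (nhds m) := by
          have h3 : Tendsto (fun x : ℝ => m^2/(x+m)) atTop (nhds 0) := by
            rw [show (fun x : ℝ => m^2/(x+m)) = fun x : ℝ => m^2 * (x+m)⁻¹ by
              funext x; ring]
            have h4 : Tendsto (fun x : ℝ => (x+m)⁻¹) atTop (nhds 0) :=
              (tendsto_atTop_add_const_right _ m tendsto_id).inv_tendsto_atTop
            simpa using h4.const_mul (m^2)
          simpa using (tendsto_const_nhds (x := m) (f := atTop)).sub h3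
        refine h2.congr' ?_
        filter_upwards [eventually_gt_atTop (0:ℝ)] with x hx
        field_simp
        ring
      exact h1.comp hBtop
    exact tendsto_of_tendsto_of_tendsto_of_le_of_le' hlim tendsto_const_nhds hlo hup
  -- B/M → m
  have hBMm : Tendsto (fun ε => B ε / (M ε : ℝ)) l (nhds m) := by
    have hlo : ∀ᶠ ε in l, m ≤ B ε / (M ε : ℝ) := by
      filter_upwards [hBbig] with ε h
      rw [le_div_iff₀ (hMpos ε h)]
      have h2 := hMle ε h
      calc m * (M ε : ℝ) ≤ m * (B ε / m) := by gcongr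
      _ = B ε := by field_simp
    have hup : ∀ᶠ ε in l, B ε / (M ε : ℝ) ≤ m * B ε / (B ε - m) := by
      filter_upwards [hBbig] with ε h
      have hB' := hB1 ε h
      have h1 : (0:ℝ) < B ε - m := by linarith
      rw [div_le_div_iff₀ (hMpos ε h) h1]
      have h2 := hMge ε
      calc B ε * (B ε - m) = m * B ε * (B ε / m - 1) := by field_simp
      _ ≤ m * B ε * (M ε : ℝ) := by gcongr
    have hlim : Tendsto (fun ε => m * B ε / (B ε - m)) l (nhds m) := by
      have h1 : Tendsto (fun x : ℝ => m * x / (x - m)) atTop (nhds m) := by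
        have h2 : Tendsto (fun x : ℝ => m + m^2/(x-m)) atTop (nhds m) := by
          have h3 : Tendsto (fun x : ℝ => m^2/(x-m)) atTop (nhds 0) := by
            rw [show (fun x : ℝ => m^2/(x-m)) = fun x : ℝ => m^2 * (x-m)⁻¹ by
              funext x; ring]
            have h4 : Tendsto (fun x : ℝ => (x-m)⁻¹) atTop (nhds 0) :=
              (tendsto_atTop_add_const_right _ (-m) tendsto_id).inv_tendsto_atTop
            simpa using h4.const_mul (m^2)
          simpa using (tendsto_const_nhds (x := m) (f := atTop)).add h3
        refine h2.congr' ?_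
        filter_upwards [eventually_gt_atTop m] with x hx
        have : x - m ≠ 0 := by linarith
        field_simp
        ring
      exact h1.comp hBtop
    exact tendsto_of_tendsto_of_tendsto_of_le_of_le' tendsto_const_nhds hlim hlo hup
  -- (e N)^{-(2m/N)} → 1
  have hW : Tendsto (fun ε => (Real.exp 1*(N ε:ℝ))^(-(2*m/(N ε:ℝ)))) l (nhds 1) := by
    have hNlim : Tendsto (fun t : ℝ => Real.exp (-(2*m) * ((1 + Real.log t)/t)))
        atTop (nhds 1) := by
      have ha : Tendsto (fun t : ℝ => (1 + Real.log t)/t) atTop (nhds 0) := by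
        have h1 : Tendsto (fun t : ℝ => t⁻¹) atTop (nhds (0:ℝ)) := tendsto_inv_atTop_zero
        have h2 : Tendsto (fun t : ℝ => Real.log t / t) atTop (nhds 0) := by
          have h3 := Real.tendsto_pow_log_div_mul_add_atTop 1 0 1 one_ne_zero
          simpa using h3
        have h4 := h1.add h2
        rw [add_zero] at h4
        refine h4.congr fun t => ?_
        rw [add_div, one_div]
      have hc0 := ha.const_mul (-(2*m))
      rw [mul_zero] at hc0
      have hb := (Real.continuous_exp.tendsto (0:ℝ)).comp hc0
      simp only [Function.comp_def, Real.exp_zero] at hb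
      exact hb
    refine (hNlim.comp hNtop).congr' ?_
    filter_upwards [hBbig] with ε h
    have hNp := hNpos ε h
    show Real.exp (-(2*m) * ((1 + Real.log (N ε:ℝ))/(N ε:ℝ)))
        = (Real.exp 1*(N ε:ℝ))^(-(2*m/(N ε:ℝ)))
    rw [Real.rpow_def_of_pos (by positivity),
      Real.log_mul (Real.exp_ne_zero 1) hNp.ne', Real.log_exp]
    congr 1
    ring
  -- denominator → 1
  have h2m1 : (0:ℝ) < 2*m+1 := by linarith
  have hδ0 : Tendsto (fun ε => ε^2*(N ε:ℝ)*(N ε:ℝ)^(2*m)) l (nhds 0) := by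
    set q : ℝ := 2/(2*m+1) with hq'
    have hq : 0 < q := by positivity
    have hKlim : Tendsto (fun ε => ε ^ q * (B ε/m + 1)) l (nhds 0) := by
      have hεq : Tendsto (fun ε : ℝ => ε ^ q) l (nhds 0) := by
        have hcont : ContinuousAt (fun x : ℝ => x ^ q) 0 :=
          Real.continuousAt_rpow_const 0 q (Or.inr hq.le)
        have h0 : (0:ℝ)^q = 0 := Real.zero_rpow hq.ne'
        have h1 := hcont.tendsto
        rw [h0] at h1
        exact h1.mono_left nhdsWithin_le_nhds
      have h1 : Tendsto (fun ε => B ε * ε ^ q * (1/m)) l (nhds 0) := by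
        simpa using hB0.mul_const (1/m)
      have h2 := h1.add hεq
      rw [add_zero] at h2
      refine h2.congr fun ε => by ring
    have hcomp : Tendsto (fun ε => (ε ^ q * (B ε/m + 1)) ^ (2*m+1)) l (nhds 0) := by
      have hcont : ContinuousAt (fun x : ℝ => x ^ (2*m+1)) 0 :=
        Real.continuousAt_rpow_const 0 _ (Or.inr (by linarith))
      have h1 := hcont.tendsto
      rw [Real.zero_rpow h2m1.ne'] at h1
      exact h1.comp hKlim
    refine tendsto_of_tendsto_of_tendsto_of_le_of_le' tendsto_const_nhds hcomp ?_ ?_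
    · filter_upwards [hεpos, hBbig] with ε hε h
      have hNp := hNpos ε h
      have : (0:ℝ) < (N ε:ℝ)^(2*m) := Real.rpow_pos_of_pos hNp _
      positivity
    · filter_upwards [hεpos, hBbig] with ε hε h
      have hK0 : (0:ℝ) < B ε/m + 1 := by have := hBm1 ε h; linarith
      have hNK : (N ε:ℝ) ≤ B ε/m + 1 := hNle ε h
      have hNp := hNpos ε h
      have heq : (ε ^ q * (B ε/m+1)) ^ (2*m+1)
          = ε^2 * ((B ε/m+1)^(2*m) * (B ε/m+1)) := by
        rw [Real.mul_rpow (Real.rpow_nonneg hε.le q) hK0.le]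
        congr 1
        · rw [← Real.rpow_mul hε.le]
          rw [show q * (2*m+1) = 2 by rw [hq']; field_simp]
          rw [show (2:ℝ) = ((2:ℕ):ℝ) by norm_num, Real.rpow_natCast]
        · rw [Real.rpow_add hK0, Real.rpow_one]
      rw [heq]
      calc ε^2*(N ε:ℝ)*(N ε:ℝ)^(2*m) = ε^2*((N ε:ℝ)^(2*m)*(N ε:ℝ)) := by ring
      _ ≤ ε^2 * ((B ε/m+1)^(2*m) * (B ε/m+1)) := by
          have h2m0 : (0:ℝ) ≤ 2*m := by linarith
          have hle1 : (N ε:ℝ)^(2*m) ≤ (B ε/m+1)^(2*m) :=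
            Real.rpow_le_rpow hNp.le hNK h2m0
          have := mul_le_mul hle1 hNK hNp.le (Real.rpow_nonneg hK0.le _)
          exact mul_le_mul_of_nonneg_left this (sq_nonneg ε)
  have hDlim : Tendsto (fun ε => 1 + ε^2*(N ε:ℝ)*(N ε:ℝ)^(2*m)/C) l (nhds 1) := by
    have h1 := (hδ0.div_const C).const_add 1
    simpa using h1
  -- upper limit function
  have hfU : Tendsto (fun ε => C * (B ε/(M ε:ℝ))^(2*m)) l (nhds (C * m^(2*m))) := by
    have hcont : ContinuousAt (fun x : ℝ => x ^ (2*m)) m :=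
      Real.continuousAt_rpow_const m _ (Or.inl hm.ne')
    exact (hcont.tendsto.comp hBMm).const_mul C
  -- lower limit function
  have hfL : Tendsto (fun ε =>
      C * (Real.exp 1 * (B ε/(N ε:ℝ)))^(2*m) * (Real.exp 1*(N ε:ℝ))^(-(2*m/(N ε:ℝ)))
        * Real.exp (-2*B ε/(N ε:ℝ))
        / (1 + ε^2*(N ε:ℝ)*(N ε:ℝ)^(2*m)/C)) l (nhds (C * m^(2*m))) := by
    have h1 : Tendsto (fun ε => (Real.exp 1 * (B ε/(N ε:ℝ)))^(2*m)) l
        (nhds ((Real.exp 1 * m)^(2*m))) := by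
      have hcont : ContinuousAt (fun x : ℝ => x^(2*m)) (Real.exp 1 * m) :=
        Real.continuousAt_rpow_const _ _ (Or.inl (by positivity))
      exact hcont.tendsto.comp (hBNm.const_mul _)
    have h2 : Tendsto (fun ε => Real.exp (-2*B ε/(N ε:ℝ))) l (nhds (Real.exp (-2*m))) := by
      have h3 : Tendsto (fun ε => -2*(B ε/(N ε:ℝ))) l (nhds (-2*m)) := hBNm.const_mul (-2)
      have h4 := (Real.continuous_exp.tendsto _).comp h3
      refine h4.congr fun ε => ?_
      simp only [Function.comp_def]
      rw [mul_div_assoc]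
    have hprod := ((((tendsto_const_nhds (x := C) (f := l)).mul h1).mul hW).mul h2).div
      hDlim one_ne_zero
    have hval : C * (Real.exp 1 * m)^(2*m) * 1 * Real.exp (-2*m) / 1 = C * m^(2*m) := by
      rw [div_one, mul_one, Real.mul_rpow (Real.exp_pos 1).le hm.le,
        show (Real.exp 1)^(2*m) = Real.exp (1*(2*m)) from (Real.exp_mul 1 (2*m)).symm,
        one_mul]
      rw [mul_comm (Real.exp (2*m)) (m^(2*m)), mul_assoc, mul_assoc,
        ← Real.exp_add]
      norm_num
    rw [hval] at hprod
    exact hprod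
  -- sandwich inequalities
  have hup : ∀ᶠ ε in l, B ε ^ (2*m) * quantVal m c ε (B ε)
      ≤ C * (B ε/(M ε:ℝ))^(2*m) := by
    filter_upwards [hεpos, hBbig] with ε hε h
    have hM1' := hM1 ε h
    have hBp := hB1 ε h
    have hMp := hMpos ε h
    have hmM : m * (M ε:ℝ) ≤ B ε := by
      have h2 := hMle ε h
      calc m * (M ε : ℝ) ≤ m * (B ε / m) := by gcongr
      _ = B ε := by field_simp
    have hq := aux_quantVal_le (c := c) hm hε hM1' hmM
    have hMr : (0:ℝ) < (M ε:ℝ)^(2*m) := Real.rpow_pos_of_pos hMp _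
    have hrw : C * (B ε/(M ε:ℝ))^(2*m) = B ε^(2*m) * (C / (M ε:ℝ)^(2*m)) := by
      rw [Real.div_rpow hBp.le hMp.le]
      field_simp
    rw [hrw]
    exact mul_le_mul_of_nonneg_left hq (Real.rpow_nonneg hBp.le _)
  have hlow : ∀ᶠ ε in l,
      C * (Real.exp 1 * (B ε/(N ε:ℝ)))^(2*m) * (Real.exp 1*(N ε:ℝ))^(-(2*m/(N ε:ℝ)))
        * Real.exp (-2*B ε/(N ε:ℝ)) / (1 + ε^2*(N ε:ℝ)*(N ε:ℝ)^(2*m)/C)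
      ≤ B ε ^ (2*m) * quantVal m c ε (B ε) := by
    filter_upwards [hεpos, hBbig] with ε hε h
    have hN1' := hN1 ε h
    have hBp := hB1 ε h
    have hNp := hNpos ε h
    have hml := aux_main_lower hm hc hε (by linarith : m ≤ B ε) hN1'
    have hbase : Real.exp 1 * (B ε/(N ε:ℝ)) = (Real.exp 1/(N ε:ℝ)) * B ε := by
      field_simp
    have hsplit : (Real.exp 1 * (B ε/(N ε:ℝ)))^(2*m)
        = (Real.exp 1/(N ε:ℝ))^(2*m) * B ε^(2*m) := by
      rw [hbase, Real.mul_rpow (by positivity) hBp.le]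
    have hrw : C * (Real.exp 1 * (B ε/(N ε:ℝ)))^(2*m)
          * (Real.exp 1*(N ε:ℝ))^(-(2*m/(N ε:ℝ))) * Real.exp (-2*B ε/(N ε:ℝ))
          / (1 + ε^2*(N ε:ℝ)*(N ε:ℝ)^(2*m)/C)
        = B ε^(2*m) * (C * (Real.exp 1/(N ε:ℝ))^(2*m)
          * (Real.exp 1*(N ε:ℝ))^(-(2*m/(N ε:ℝ))) * Real.exp (-2*B ε/(N ε:ℝ))
          / (1 + ε^2*(N ε:ℝ)*(N ε:ℝ)^(2*m)/C)) := by
      rw [hsplit]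
      ring
    rw [hrw]
    exact mul_le_mul_of_nonneg_left hml (Real.rpow_nonneg hBp.le _)
  have hsq := tendsto_of_tendsto_of_tendsto_of_le_of_le' hfL hfU hlow hup
  have hfinal : c ^ 2 * m ^ (2 * m) / Real.pi ^ (2 * m) = C * m^(2*m) := by
    rw [hCdef]; ring
  rw [hfinal]
  exact hsq
end
end

section
/- Let m > 0, c > 0, ε > 0, B > 0, and let J be a positive integer. Let σ_1², …, σ_J² be positive reals with ∑_{j=1}^J j^{2m} σ_j² ≤ c²/π^{2m}, and set η = exp(−2B/J) · ( ∏_{j=1}^J σ_j⁴/(σ_j²+ε²) )^{1/J}. Then J·η ≤ (c²/π^{2m}) · ( e^{B/m} · J! )^{−2m/J}. -/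
/-!
Since `σ⁴/(σ² + ε²) ≤ σ²`, the geometric mean in `η` is at most that of the `σ_j²`. Applying AM-GM
to the numbers `j^{2m} σ_j²` bounds `(J!)^{2m/J}` times this geometric mean by `(c²/π^{2m})/J`,
because `∏_{j ≤ J} j^{2m} = (J!)^{2m}`; finally `exp(B/m)^{-2m/J} = exp(-2B/J)`.
-/

open Real Finset Nat

lemma sq_div_add_le_self {x d : ℝ} (hx : 0 ≤ x) (hd : 0 ≤ d) : x ^ 2 / (x + d) ≤ x :=
  div_le_of_le_mul₀ (add_nonneg hx hd) hx (by nlinarith)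

lemma geom_mean_le_arith_mean_fin {J : ℕ} (hJ : 0 < J) {z : Fin J → ℝ} (hz : ∀ j, 0 ≤ z j) :
    (∏ j, z j) ^ (1 / (J : ℝ)) ≤ (∑ j, z j) / J := by
  have hJ' : (J : ℝ) ≠ 0 := by positivity
  rw [← finsetProd_rpow _ _ fun j _ => hz j, sum_div]
  simp_rw [div_eq_inv_mul (z _) (J : ℝ), ← one_div]
  refine geom_mean_le_arith_mean_weighted _ _ _ (fun _ _ => by positivity) ?_ fun j _ => hz j
  simp [hJ']

lemma prod_natCast_add_one_rpow (J : ℕ) (p : ℝ) :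
    ∏ j : Fin J, ((j : ℕ) + 1 : ℝ) ^ p = (J ! : ℝ) ^ p := by
  rw [finsetProd_rpow _ _ fun j _ => by positivity, Fin.prod_univ_eq_prod_range (fun i => (i : ℝ) + 1)]
  exact_mod_cast congrArg (fun n : ℕ => (n : ℝ) ^ p) (prod_range_add_one_eq_factorial J)

lemma prod_rpow_inv_le_of_sum_mul_le {J : ℕ} (hJ : 0 < J) {p C : ℝ} {x : Fin J → ℝ}
    (hx : ∀ j, 0 ≤ x j) (hsum : ∑ j : Fin J, ((j : ℕ) + 1 : ℝ) ^ p * x j ≤ C) :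
    (∏ j, x j) ^ (1 / (J : ℝ)) ≤ C / J * (J ! : ℝ) ^ (-p / J) := by
  have hfac : (0 : ℝ) < J ! := by exact_mod_cast factorial_pos J
  have hweighted : (J ! : ℝ) ^ (p / J) * (∏ j, x j) ^ (1 / (J : ℝ)) ≤ C / J := by
    calc (J ! : ℝ) ^ (p / J) * (∏ j, x j) ^ (1 / (J : ℝ))
        = (∏ j : Fin J, ((j : ℕ) + 1 : ℝ) ^ p * x j) ^ (1 / (J : ℝ)) := by
          rw [prod_mul_distrib, prod_natCast_add_one_rpow,
            mul_rpow (by positivity) (prod_nonneg fun j _ => hx j), ← rpow_mul hfac.le,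
            mul_one_div]
      _ ≤ (∑ j : Fin J, ((j : ℕ) + 1 : ℝ) ^ p * x j) / J :=
          geom_mean_le_arith_mean_fin hJ fun j => mul_nonneg (by positivity) (hx j)
      _ ≤ C / J := by gcongr
  rw [neg_div, rpow_neg hfac.le, ← div_eq_mul_inv, le_div_iff₀ (by positivity), mul_comm]
  exact hweighted

theorem insufficient_key_inequality_general (m c ε B : ℝ) (hm : 0 < m) (J : ℕ) (hJ : 0 < J) (σ2 : Fin J → ℝ) (hσ : ∀ j, 0 < σ2 j)
    (hconstr : ∑ j : Fin J, ((j : ℕ) + 1 : ℝ) ^ (2 * m) * σ2 j ≤ c ^ 2 / Real.pi ^ (2 * m)) :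
    (J : ℝ) *
        (Real.exp (-(2 * B) / J) *
          (∏ j : Fin J, (σ2 j) ^ 2 / (σ2 j + ε ^ 2)) ^ (1 / (J : ℝ))) ≤
      c ^ 2 / Real.pi ^ (2 * m) *
        (Real.exp (B / m) * (J.factorial : ℝ)) ^ (-(2 * m) / (J : ℝ)) := by
  have hratio : (∏ j, σ2 j ^ 2 / (σ2 j + ε ^ 2)) ^ (1 / (J : ℝ)) ≤ (∏ j, σ2 j) ^ (1 / (J : ℝ)) :=
    rpow_le_rpow (prod_nonneg fun j _ => by have := hσ j; positivity)
      (prod_le_prod (fun j _ => by have := hσ j; positivity)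
        fun j _ => sq_div_add_le_self (hσ j).le (sq_nonneg ε))
      (by positivity)
  have hexp : (exp (B / m) * (J ! : ℝ)) ^ (-(2 * m) / J) =
      exp (-(2 * B) / J) * (J ! : ℝ) ^ (-(2 * m) / J) := by
    rw [mul_rpow (exp_pos _).le (by positivity), ← exp_mul]
    congr 2
    field_simp
  rw [hexp]
  calc (J : ℝ) * (exp (-(2 * B) / J) * (∏ j, σ2 j ^ 2 / (σ2 j + ε ^ 2)) ^ (1 / (J : ℝ)))
      ≤ J * (exp (-(2 * B) / J) * (c ^ 2 / π ^ (2 * m) / J * (J ! : ℝ) ^ (-(2 * m) / J))) := by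
        gcongr
        exact hratio.trans (prod_rpow_inv_le_of_sum_mul_le hJ (fun j => (hσ j).le) hconstr)
    _ = c ^ 2 / π ^ (2 * m) * (exp (-(2 * B) / J) * (J ! : ℝ) ^ (-(2 * m) / J)) := by
        field_simp

/-- **Key inequality for the insufficient-regime bound:** if `σ_1², …, σ_J²` are positive with
`∑_{j=1}^J j^{2m} σ_j² ≤ c²/π^{2m}` and
`η = exp(−2B/J) (∏_{j=1}^J σ_j⁴/(σ_j²+ε²))^{1/J}`, then
`J η ≤ (c²/π^{2m}) (e^{B/m} J!)^{−2m/J}`. -/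
theorem insufficient_key_inequality (m c ε B : ℝ) (hm : 0 < m) (hc : 0 < c) (hε : 0 < ε)
    (hB : 0 < B) (J : ℕ) (hJ : 0 < J) (σ2 : Fin J → ℝ) (hσ : ∀ j, 0 < σ2 j)
    (hconstr : ∑ j : Fin J, ((j : ℕ) + 1 : ℝ) ^ (2 * m) * σ2 j ≤ c ^ 2 / Real.pi ^ (2 * m)) :
    (J : ℝ) *
        (Real.exp (-(2 * B) / J) *
          (∏ j : Fin J, (σ2 j) ^ 2 / (σ2 j + ε ^ 2)) ^ (1 / (J : ℝ))) ≤
      c ^ 2 / Real.pi ^ (2 * m) *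
        (Real.exp (B / m) * (J.factorial : ℝ)) ^ (-(2 * m) / (J : ℝ)) :=
  insufficient_key_inequality_general m c ε B hm J hJ σ2 hσ hconstr
end

section
/- Let x₀ > 0 and let f and g be square-integrable functions on (0, x₀), neither of which is zero almost everywhere. Suppose that for every square-integrable function v on (0, x₀), the implication ∫_0^{x₀} f(x) v(x) dx ≤ 0 ⟹ ∫_0^{x₀} g(x) v(x) dx ≤ 0 holds. Then there exists a constant λ such that f(x) = λ g(x) for almost every x ∈ (0, x₀). -/
/-!
Read in `L²`, the hypothesis says `⟪f, v⟫ ≤ 0 → ⟪g, v⟫ ≤ 0`. Testing it with `±v` shows that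
every `v ⊥ f` is orthogonal to `g`, so `g ∈ (ℝ ∙ f)ᗮᗮ = ℝ ∙ f`, say `g = c f`; since `g ≠ 0`,
`c ≠ 0` and `f = c⁻¹ g`.
-/

open MeasureTheory

theorem exists_eq_smul_of_inner_nonpos_imp {E : Type*} [NormedAddCommGroup E]
    [InnerProductSpace ℝ E] {f g : E}
    (h : ∀ u : E, inner ℝ f u ≤ 0 → inner ℝ g u ≤ 0) :
    ∃ c : ℝ, g = c • f := by
  have hg : g ∈ (ℝ ∙ f)ᗮᗮ := by
    rw [Submodule.mem_orthogonal]
    intro u hu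
    rw [Submodule.mem_orthogonal_singleton_iff_inner_right] at hu
    have hpos := h u hu.le
    have hneg := h (-u) (by rw [inner_neg_right, hu, neg_zero])
    rw [inner_neg_right] at hneg
    rw [real_inner_comm]
    linarith
  rw [Submodule.orthogonal_orthogonal, Submodule.mem_span_singleton] at hg
  obtain ⟨c, hc⟩ := hg
  exact ⟨c, hc.symm⟩

theorem integral_mul_eq_inner_toLp {α : Type*} [MeasurableSpace α] {μ : Measure α}
    {f : α → ℝ} (hf : MemLp f 2 μ) (u : Lp ℝ 2 μ) :
    ∫ x, f x * u x ∂μ = inner ℝ (hf.toLp f) u := by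
  rw [L2.inner_def]
  refine integral_congr_ae ?_
  filter_upwards [hf.coeFn_toLp] with x hx
  rw [hx, real_inner_comm]
  rfl

theorem exists_ae_eq_const_mul_of_integral_mul_nonpos_imp {α : Type*} [MeasurableSpace α]
    {μ : Measure α} {f g : α → ℝ} (hf : MemLp f 2 μ) (hg : MemLp g 2 μ)
    (h : ∀ v : α → ℝ, MemLp v 2 μ → ∫ x, f x * v x ∂μ ≤ 0 → ∫ x, g x * v x ∂μ ≤ 0) :
    ∃ c : ℝ, g =ᵐ[μ] fun x => c * f x := by
  obtain ⟨c, hc⟩ := exists_eq_smul_of_inner_nonpos_imp (f := hf.toLp f) (g := hg.toLp g)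
    fun u => by
      simpa only [integral_mul_eq_inner_toLp hf, integral_mul_eq_inner_toLp hg]
        using h u (Lp.memLp u)
  refine ⟨c, ?_⟩
  filter_upwards [hf.coeFn_toLp, hg.coeFn_toLp, Lp.coeFn_smul c (hf.toLp f)]
    with x hfx hgx hcx
  rw [← hgx, ← hfx, hc, hcx, Pi.smul_apply, smul_eq_mul]

theorem proportional_of_integral_implication_general (x₀ : ℝ) (f g : ℝ → ℝ)
    (hf : MemLp f 2 (volume.restrict (Set.Ioo 0 x₀)))
    (hg : MemLp g 2 (volume.restrict (Set.Ioo 0 x₀)))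
    (hg0 : ¬ g =ᵐ[volume.restrict (Set.Ioo 0 x₀)] 0)
    (h : ∀ v : ℝ → ℝ, MemLp v 2 (volume.restrict (Set.Ioo 0 x₀)) →
      (∫ x in Set.Ioo 0 x₀, f x * v x) ≤ 0 → (∫ x in Set.Ioo 0 x₀, g x * v x) ≤ 0) :
    ∃ lam : ℝ, f =ᵐ[volume.restrict (Set.Ioo 0 x₀)] fun x => lam * g x := by
  obtain ⟨c, hgc⟩ := exists_ae_eq_const_mul_of_integral_mul_nonpos_imp hf hg h
  have hc : c ≠ 0 := by
    rintro rfl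
    refine hg0 (hgc.trans ?_)
    simp only [zero_mul]
    rfl
  refine ⟨c⁻¹, ?_⟩
  filter_upwards [hgc] with x hx
  rw [hx, inv_mul_cancel_left₀ hc]

/-- **Variational lemma:** if `f, g ∈ L²(0, x₀)` are nonzero and every square-integrable `v`
with `∫ f v ≤ 0` also satisfies `∫ g v ≤ 0`, then `f = λ g` almost everywhere for some
constant `λ`. -/
theorem proportional_of_integral_implication (x₀ : ℝ) (hx₀ : 0 < x₀) (f g : ℝ → ℝ)
    (hf : MemLp f 2 (volume.restrict (Set.Ioo 0 x₀)))
    (hg : MemLp g 2 (volume.restrict (Set.Ioo 0 x₀)))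
    (hf0 : ¬ f =ᵐ[volume.restrict (Set.Ioo 0 x₀)] 0)
    (hg0 : ¬ g =ᵐ[volume.restrict (Set.Ioo 0 x₀)] 0)
    (h : ∀ v : ℝ → ℝ, MemLp v 2 (volume.restrict (Set.Ioo 0 x₀)) →
      (∫ x in Set.Ioo 0 x₀, f x * v x) ≤ 0 → (∫ x in Set.Ioo 0 x₀, g x * v x) ≤ 0) :
    ∃ lam : ℝ, f =ᵐ[volume.restrict (Set.Ioo 0 x₀)] fun x => lam * g x :=
  proportional_of_integral_implication_general x₀ f g hf hg hg0 h
end
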